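/- arXiv:math/0211016 — 9 statements merged into one kernel-verified Lean document; each statement's English description precedes it below -/
import Mathlib

section
/- Let H be a complex Hilbert space and let T be an invertible effect on H (i.e., T is a positive bounded operator with 0 ≤ T ≤ I and T invertible). Then the map φ(E) = (T²(2I−T²)⁻¹)^{-1/2} ((I − T² + T(I+E)⁻¹T)⁻¹ − I) (T²(2I−T²)⁻¹)^{-1/2} is a well-defined bijection of the set E(H) of effects onto itself which preserves the order in both directions: E ≤ F if and only if φ(E) ≤ φ(F). -/
set_option synthInstance.maxHeartbeats 1000000
set_option maxHeartbeats 1000000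

open scoped InnerProductSpace

/-- An effect on a Hilbert space: a positive operator majorized by the identity. -/
def IsEffect {H : Type} [NormedAddCommGroup H] [InnerProductSpace ℂ H] [CompleteSpace H]
    (E : H →L[ℂ] H) : Prop := 0 ≤ E ∧ E ≤ 1

/-- The order preserving bijection of `E(H)` built from a fixed invertible effect `T`:
`φ(E) = (T²(2I−T²)⁻¹)^{-1/2} ((I − T² + T(I+E)⁻¹T)⁻¹ − I) (T²(2I−T²)⁻¹)^{-1/2}`. -/
noncomputable def molnarMap {H : Type} [NormedAddCommGroup H] [InnerProductSpace ℂ H]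
    [CompleteSpace H] (T : H →L[ℂ] H) (E : H →L[ℂ] H) : H →L[ℂ] H :=
  Ring.inverse (CFC.sqrt (T ^ 2 * Ring.inverse (2 - T ^ 2))) *
    (Ring.inverse (1 - T ^ 2 + T * Ring.inverse (1 + E) * T) - 1) *
      Ring.inverse (CFC.sqrt (T ^ 2 * Ring.inverse (2 - T ^ 2)))

/-!
The map factors through seven maps between operator intervals,
`[0, 1] → [1, 2] → [½, 1] → [T²/2, T²] → [m, 1] → [1, m⁻¹] → [0, S] → [0, 1]`, namely
`E ↦ 1 + E`, inversion, `Y ↦ TYT`, `Z ↦ 1 − T² + Z`, inversion, `W ↦ W − 1` and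
`V ↦ S^{-1/2} V S^{-1/2}`, where `m = 1 − T²/2` and `S = T²(2 − T²)⁻¹ = m⁻¹ − 1`. Translations and
conjugations by invertible self-adjoint elements are order isomorphisms of the whole algebra, and
inversion is an order anti-isomorphism between intervals of strictly positive elements, so the two
inversions compose to an order isomorphism.
-/

open Set
open scoped Ring

structure OrderIsoOn {α β : Type*} [LE α] [LE β] (f : α → β) (s : Set α) (t : Set β) :
    Prop where
  bijOn : BijOn f s t
  le_iff_le : ∀ ⦃x⦄, x ∈ s → ∀ ⦃y⦄, y ∈ s → (f x ≤ f y ↔ x ≤ y)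

structure OrderAntiIsoOn {α β : Type*} [LE α] [LE β] (f : α → β) (s : Set α) (t : Set β) :
    Prop where
  bijOn : BijOn f s t
  le_iff_le : ∀ ⦃x⦄, x ∈ s → ∀ ⦃y⦄, y ∈ s → (f x ≤ f y ↔ y ≤ x)

section Composition

variable {α β γ : Type*} [LE α] [LE β] [LE γ] {f : α → β} {g : β → γ}
  {s : Set α} {t : Set β} {u : Set γ}

theorem OrderIsoOn.comp (hg : OrderIsoOn g t u) (hf : OrderIsoOn f s t) :
    OrderIsoOn (g ∘ f) s u :=
  ⟨hg.bijOn.comp hf.bijOn, fun _ hx _ hy =>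
    (hg.le_iff_le (hf.bijOn.mapsTo hx) (hf.bijOn.mapsTo hy)).trans (hf.le_iff_le hx hy)⟩

theorem OrderIsoOn.comp_orderAntiIsoOn (hg : OrderIsoOn g t u) (hf : OrderAntiIsoOn f s t) :
    OrderAntiIsoOn (g ∘ f) s u :=
  ⟨hg.bijOn.comp hf.bijOn, fun _ hx _ hy =>
    (hg.le_iff_le (hf.bijOn.mapsTo hx) (hf.bijOn.mapsTo hy)).trans (hf.le_iff_le hx hy)⟩

theorem OrderAntiIsoOn.comp_orderIsoOn (hg : OrderAntiIsoOn g t u) (hf : OrderIsoOn f s t) :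
    OrderAntiIsoOn (g ∘ f) s u :=
  ⟨hg.bijOn.comp hf.bijOn, fun _ hx _ hy =>
    (hg.le_iff_le (hf.bijOn.mapsTo hx) (hf.bijOn.mapsTo hy)).trans (hf.le_iff_le hy hx)⟩

theorem OrderAntiIsoOn.comp (hg : OrderAntiIsoOn g t u) (hf : OrderAntiIsoOn f s t) :
    OrderIsoOn (g ∘ f) s u :=
  ⟨hg.bijOn.comp hf.bijOn, fun _ hx _ hy =>
    (hg.le_iff_le (hf.bijOn.mapsTo hx) (hf.bijOn.mapsTo hy)).trans (hf.le_iff_le hy hx)⟩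

end Composition

theorem OrderIso.orderIsoOn_Icc {α β : Type*} [Preorder α] [Preorder β] (e : α ≃o β) (a b : α) :
    OrderIsoOn e (Icc a b) (Icc (e a) (e b)) :=
  ⟨e.image_Icc a b ▸ e.injective.injOn.bijOn_image, fun _ _ _ _ => e.le_iff_le⟩

section StarOrderedRing

variable {A : Type*} [Ring A] [StarRing A] [PartialOrder A] [StarOrderedRing A] {u : A}

theorem IsSelfAdjoint.conjugate_le_conjugate_iff (hu : IsSelfAdjoint u) (hu' : IsUnit u)
    {x y : A} : u * x * u ≤ u * y * u ↔ x ≤ y := by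
  rw [← sub_nonneg, ← sub_mul, ← mul_sub, ← sub_nonneg (b := x)]
  nth_rewrite 1 [← hu.star_eq]
  exact hu'.star_left_conjugate_nonneg_iff

noncomputable def IsSelfAdjoint.conjOrderIso (hu : IsSelfAdjoint u) (hu' : IsUnit u) :
    A ≃o A where
  toFun x := u * x * u
  invFun x := u⁻¹ʳ * x * u⁻¹ʳ
  left_inv x := by
    simp only [mul_assoc, Ring.inverse_mul_cancel_left _ _ hu', Ring.mul_inverse_cancel _ hu',
      mul_one]
  right_inv x := by
    simp only [mul_assoc, Ring.mul_inverse_cancel_left _ _ hu', Ring.inverse_mul_cancel _ hu',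
      mul_one]
  map_rel_iff' := hu.conjugate_le_conjugate_iff hu'

end StarOrderedRing

section CStarAlgebra

variable {A : Type*} [CStarAlgebra A] [PartialOrder A] [StarOrderedRing A]

theorem orderAntiIsoOn_ringInverse_Icc {a b : A} (ha : IsStrictlyPositive a)
    (hb : IsStrictlyPositive b) : OrderAntiIsoOn Ring.inverse (Icc a b) (Icc b⁻¹ʳ a⁻¹ʳ) := by
  have pos_of_mem {x : A} (hx : x ∈ Icc a b) : IsStrictlyPositive x := ha.of_le hx.1
  have inv_pos_of_mem {y : A} (hy : y ∈ Icc b⁻¹ʳ a⁻¹ʳ) : IsStrictlyPositive y :=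
    hb.ringInverse.of_le hy.1
  refine ⟨⟨fun x hx => ?_, fun x hx y hy hxy => ?_, fun y hy => ?_⟩, fun x hx y hy => ?_⟩
  · exact ⟨CStarAlgebra.ringInverse_le_ringInverse hx.2 (pos_of_mem hx),
      CStarAlgebra.ringInverse_le_ringInverse hx.1 ha⟩
  · rw [← Ring.inverse_inverse (pos_of_mem hx).isUnit, hxy,
      Ring.inverse_inverse (pos_of_mem hy).isUnit]
  · refine ⟨y⁻¹ʳ, ⟨?_, ?_⟩, Ring.inverse_inverse (inv_pos_of_mem hy).isUnit⟩
    · simpa [Ring.inverse_inverse ha.isUnit] using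
        CStarAlgebra.ringInverse_le_ringInverse hy.2 (inv_pos_of_mem hy)
    · simpa [Ring.inverse_inverse hb.isUnit] using
        CStarAlgebra.ringInverse_le_ringInverse hy.1 hb.ringInverse
  · refine ⟨fun h => ?_, fun h => CStarAlgebra.ringInverse_le_ringInverse h (pos_of_mem hy)⟩
    simpa [Ring.inverse_inverse (pos_of_mem hx).isUnit, Ring.inverse_inverse (pos_of_mem hy).isUnit]
      using CStarAlgebra.ringInverse_le_ringInverse h (pos_of_mem hx).ringInverse

theorem sq_le_one_of_nonneg_of_le_one {a : A} (ha₀ : 0 ≤ a) (ha₁ : a ≤ 1) : a ^ 2 ≤ 1 := by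
  rw [← CStarAlgebra.norm_le_one_iff_of_nonneg _ ha₀.isSelfAdjoint.sq_nonneg]
  have : ‖a‖ ≤ 1 := (CStarAlgebra.norm_le_one_iff_of_nonneg a ha₀).2 ha₁
  exact (norm_pow_le' a two_pos).trans (pow_le_one₀ (norm_nonneg a) this)

end CStarAlgebra

theorem Ring.inverse_smul {𝕜 A : Type*} [Field 𝕜] [Ring A] [Algebra 𝕜 A] {c : 𝕜} (hc : c ≠ 0)
    (x : A) : (c • x)⁻¹ʳ = c⁻¹ • x⁻¹ʳ := by
  have isUnit_iff : IsUnit (c • x) ↔ IsUnit x := by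
    simpa [Units.smul_def] using isUnit_smul_iff (Units.mk0 c hc) x
  by_cases hx : IsUnit x
  · calc (c • x)⁻¹ʳ = (c • x)⁻¹ʳ * ((c • x) * (c⁻¹ • x⁻¹ʳ)) := by
          rw [smul_mul_smul, mul_inv_cancel₀ hc, Ring.mul_inverse_cancel x hx, one_smul, mul_one]
      _ = c⁻¹ • x⁻¹ʳ := Ring.inverse_mul_cancel_left _ _ (isUnit_iff.2 hx)
  · rw [Ring.inverse_non_unit x hx, Ring.inverse_non_unit _ (isUnit_iff.not.2 hx), smul_zero]

section HalfScalar

variable {A : Type*} [Ring A] [Algebra ℝ A]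

variable (A) in
theorem two_eq_smul_one : (2 : A) = (2 : ℝ) • 1 := by rw [two_smul, one_add_one_eq_two]

theorem sub_sq_add_mul_inverse_two_mul (T : A) :
    1 - T ^ 2 + T * (2 : A)⁻¹ʳ * T = (2⁻¹ : ℝ) • (2 - T ^ 2) := by
  rw [two_eq_smul_one A, Ring.inverse_smul two_ne_zero, Ring.inverse_one, mul_smul_comm,
    smul_mul_assoc, mul_one, ← sq]
  module

theorem inv_two_smul_two_sub (x : A) : (2⁻¹ : ℝ) • (2 - x) = 1 - (2⁻¹ : ℝ) • x := by
  rw [two_eq_smul_one A]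
  module

theorem inverse_inv_two_smul_sub_one {D : A} (hD : IsUnit D) :
    ((2⁻¹ : ℝ) • D)⁻¹ʳ - 1 = (2 - D) * D⁻¹ʳ := by
  rw [Ring.inverse_smul (by norm_num), inv_inv, sub_mul, Ring.mul_inverse_cancel D hD, two_smul,
    two_mul]

end HalfScalar

section Molnar

variable {A : Type*} [CStarAlgebra A] [PartialOrder A] [StarOrderedRing A]

theorem orderAntiIsoOn_sub_sq_add_conj_inverse {T : A} (hT : IsSelfAdjoint T) (hT' : IsUnit T) :
    OrderAntiIsoOn (fun E => 1 - T ^ 2 + T * (1 + E)⁻¹ʳ * T) (Icc 0 1)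
      (Icc ((2⁻¹ : ℝ) • (2 - T ^ 2)) 1) := by
  have add_one : OrderIsoOn (1 + ·) (Icc (0 : A) 1) (Icc 1 2) := by
    have h : OrderIsoOn (1 + ·) (Icc (0 : A) 1) (Icc (1 + 0) (1 + 1)) :=
      (OrderIso.addLeft (1 : A)).orderIsoOn_Icc 0 1
    rwa [add_zero, one_add_one_eq_two] at h
  have inverse : OrderAntiIsoOn Ring.inverse (Icc (1 : A) 2) (Icc 2⁻¹ʳ 1) := by
    have h2 : IsStrictlyPositive (2 : A) := by
      rw [two_eq_smul_one A]; exact isStrictlyPositive_one.smul two_pos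
    simpa using orderAntiIsoOn_ringInverse_Icc isStrictlyPositive_one h2
  have conj_add : OrderIsoOn (fun Y => 1 - T ^ 2 + T * Y * T) (Icc 2⁻¹ʳ 1)
      (Icc ((2⁻¹ : ℝ) • (2 - T ^ 2)) 1) := by
    have h : OrderIsoOn (fun Y => 1 - T ^ 2 + T * Y * T) (Icc 2⁻¹ʳ 1)
        (Icc (1 - T ^ 2 + T * 2⁻¹ʳ * T) (1 - T ^ 2 + T * 1 * T)) :=
      ((OrderIso.addLeft (1 - T ^ 2)).orderIsoOn_Icc _ _).comp
        ((hT.conjOrderIso hT').orderIsoOn_Icc 2⁻¹ʳ 1)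
    rwa [sub_sq_add_mul_inverse_two_mul, mul_one, ← sq, sub_add_cancel] at h
  exact (conj_add.comp_orderAntiIsoOn inverse).comp_orderIsoOn add_one

open CFC in
theorem orderAntiIsoOn_conj_inverse_sub_one {m : A} (hm : IsStrictlyPositive m)
    (hS : IsStrictlyPositive (m⁻¹ʳ - 1)) :
    OrderAntiIsoOn (fun G => (sqrt (m⁻¹ʳ - 1))⁻¹ʳ * (G⁻¹ʳ - 1) * (sqrt (m⁻¹ʳ - 1))⁻¹ʳ)
      (Icc m 1) (Icc 0 1) := by
  set S := m⁻¹ʳ - 1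
  have inverse : OrderAntiIsoOn Ring.inverse (Icc m 1) (Icc 1 m⁻¹ʳ) := by
    simpa using orderAntiIsoOn_ringInverse_Icc hm isStrictlyPositive_one
  have hr : IsSelfAdjoint (sqrt S)⁻¹ʳ := (IsSelfAdjoint.of_nonneg (sqrt_nonneg S)).ringInverse
  have hr' : IsUnit (sqrt S)⁻¹ʳ := (IsStrictlyPositive.isUnit_cfcSqrt S hS).ringInverse
  have hrSr : (sqrt S)⁻¹ʳ * S * (sqrt S)⁻¹ʳ = 1 := by
    rw [← sqrt_ringInverse]; exact conjSqrt_ringInverse_self S hS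
  have sub_conj : OrderIsoOn (fun W => (sqrt S)⁻¹ʳ * (W - 1) * (sqrt S)⁻¹ʳ) (Icc 1 m⁻¹ʳ)
      (Icc 0 1) := by
    have h : OrderIsoOn (fun W => (sqrt S)⁻¹ʳ * (W - 1) * (sqrt S)⁻¹ʳ) (Icc 1 m⁻¹ʳ)
        (Icc ((sqrt S)⁻¹ʳ * (1 - 1) * (sqrt S)⁻¹ʳ) ((sqrt S)⁻¹ʳ * S * (sqrt S)⁻¹ʳ)) :=
      ((hr.conjOrderIso hr').orderIsoOn_Icc _ _).comp
        ((OrderIso.subRight (1 : A)).orderIsoOn_Icc 1 m⁻¹ʳ)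
    rwa [sub_self, mul_zero, zero_mul, hrSr] at h
  exact sub_conj.comp_orderAntiIsoOn inverse

open CFC in
theorem orderIsoOn_molnar {T : A} (hT₀ : 0 ≤ T) (hT₁ : T ≤ 1) (hT : IsUnit T) :
    OrderIsoOn (fun E : A => (sqrt (T ^ 2 * (2 - T ^ 2)⁻¹ʳ))⁻¹ʳ *
      ((1 - T ^ 2 + T * (1 + E)⁻¹ʳ * T)⁻¹ʳ - 1) * (sqrt (T ^ 2 * (2 - T ^ 2)⁻¹ʳ))⁻¹ʳ)
      (Icc 0 1) (Icc 0 1) := by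
  have hD : IsStrictlyPositive (2 - T ^ 2 : A) := by
    have : (2 - T ^ 2 : A) = 1 + (1 - T ^ 2) := by rw [← one_add_one_eq_two]; abel
    rw [this]
    exact isStrictlyPositive_one.add_nonneg (sub_nonneg.2 (sq_le_one_of_nonneg_of_le_one hT₀ hT₁))
  have hm : IsStrictlyPositive ((2⁻¹ : ℝ) • (2 - T ^ 2 : A)) := hD.smul (by norm_num)
  have hm_le_one : (2⁻¹ : ℝ) • (2 - T ^ 2 : A) ≤ 1 := by
    rw [inv_two_smul_two_sub]
    exact sub_le_self _ (smul_nonneg (by norm_num) hT₀.isSelfAdjoint.sq_nonneg)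
  have hS_eq : ((2⁻¹ : ℝ) • (2 - T ^ 2 : A))⁻¹ʳ - 1 = T ^ 2 * (2 - T ^ 2)⁻¹ʳ := by
    rw [inverse_inv_two_smul_sub_one hD.isUnit, sub_sub_cancel]
  have hS : IsStrictlyPositive (((2⁻¹ : ℝ) • (2 - T ^ 2 : A))⁻¹ʳ - 1) := by
    refine (hS_eq ▸ (hT.pow 2).mul hD.isUnit.ringInverse).isStrictlyPositive ?_
    rw [sub_nonneg]
    simpa using CStarAlgebra.ringInverse_le_ringInverse hm_le_one hm
  rw [← hS_eq]
  exact (orderAntiIsoOn_conj_inverse_sub_one hm hS).comp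
    (orderAntiIsoOn_sub_sq_add_conj_inverse hT₀.isSelfAdjoint hT)

end Molnar

/-- for an invertible effect `T`, the map `molnarMap T` is a well-defined
bijection of the set of effects onto itself which preserves the order in both directions. -/
theorem molnarMap_bijOn_effects_and_orderPreserving
    {H : Type} [NormedAddCommGroup H] [InnerProductSpace ℂ H] [CompleteSpace H]
    (T : H →L[ℂ] H) (hT : IsEffect T) (hTinv : IsUnit T) :
    Set.BijOn (molnarMap T) {E | IsEffect E} {E | IsEffect E} ∧
      ∀ E F : H →L[ℂ] H, IsEffect E → IsEffect F →
        (E ≤ F ↔ molnarMap T E ≤ molnarMap T F) := by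
  have h := orderIsoOn_molnar hT.1 hT.2 hTinv
  exact ⟨h.bijOn, fun E F hE hF => (h.le_iff_le hE hF).symm⟩
end

section
/- Let φ : E(H) → E(H) be a bijection such that E ≤ F ⟺ φ(E) ≤ φ(F) for all effects E, F. Then φ maps the set of projections bijectively onto itself. -/
open scoped InnerProductSpace

/-- An orthogonal projection: a self-adjoint idempotent operator. -/
def IsOrthogonalProjection {H : Type} [NormedAddCommGroup H] [InnerProductSpace ℂ H]
    [CompleteSpace H] (P : H →L[ℂ] H) : Prop := IsIdempotentElem P ∧ IsSelfAdjoint P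

/-!
An effect `P` is a projection iff it has a complement in every interval `[0, D]` with `P ≤ D`,
the join being a least upper bound among effects (which do not form a lattice). For a projection
take `D - P`, which is orthogonal to `P`. Conversely, test an effect `A` with `D = 2A - A²`: a
complement `C ≤ D ≤ 2A` has `C / 2` below both `A` and `C`, so `C = 0`; then `D = A`, i.e.
`A² = A`. This property is purely order-theoretic, so order automorphisms preserve it.
-/

open Set

def HasRelCompl {α : Type*} [PartialOrder α] [OrderBot α] (a : α) : Prop :=
  ∀ d, a ≤ d → ∃ c, Disjoint a c ∧ IsLUB {a, c} d

namespace OrderIso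

variable {α β : Type*} [PartialOrder α] [OrderBot α] [PartialOrder β] [OrderBot β]

theorem disjoint_apply (e : α ≃o β) {a c : α} (h : Disjoint a c) : Disjoint (e a) (e c) := by
  intro x hxa hxc
  rw [← e.apply_symm_apply x, ← e.map_bot, e.le_iff_le]
  exact h (e.symm_apply_le.mpr hxa) (e.symm_apply_le.mpr hxc)

theorem hasRelCompl_apply (e : α ≃o β) {a : α} (h : HasRelCompl a) : HasRelCompl (e a) := by
  intro d had
  obtain ⟨c, hac, hlub⟩ := h (e.symm d) (e.le_symm_apply.mpr had)
  refine ⟨e c, e.disjoint_apply hac, ?_⟩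
  rwa [← image_pair, e.isLUB_image]

theorem hasRelCompl_apply_iff (e : α ≃o β) {a : α} : HasRelCompl (e a) ↔ HasRelCompl a :=
  ⟨fun h => by simpa using e.symm.hasRelCompl_apply h, e.hasRelCompl_apply⟩

end OrderIso

noncomputable def Set.BijOn.orderIso {α β : Type*} [Preorder α] [Preorder β] {f : α → β}
    {s : Set α} {t : Set β} (h : BijOn f s t) (hf : ∀ a ∈ s, ∀ b ∈ s, f a ≤ f b ↔ a ≤ b) :
    s ≃o t where
  toEquiv := h.equiv f
  map_rel_iff' {a b} := hf a a.2 b b.2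

section CStarAlgebra

variable {A : Type*} [CStarAlgebra A] [PartialOrder A] [StarOrderedRing A]

theorem eq_zero_of_disjoint_of_le_add_self {a c : A} (ha : a ∈ Icc (0 : A) 1)
    (hc : c ∈ Icc (0 : A) 1) (hdisj : Disjoint (⟨a, ha⟩ : Icc (0 : A) 1) ⟨c, hc⟩)
    (hca : c ≤ a + a) : c = 0 := by
  have hhalf0 : 0 ≤ (2⁻¹ : ℝ) • c := smul_nonneg (by norm_num) hc.1
  have hhalfc : (2⁻¹ : ℝ) • c ≤ c := by
    rw [← sub_nonneg]
    convert hhalf0 using 1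
    module
  have hhalfa : (2⁻¹ : ℝ) • c ≤ a := by
    calc (2⁻¹ : ℝ) • c ≤ (2⁻¹ : ℝ) • (a + a) := smul_le_smul_of_nonneg_left hca (by norm_num)
      _ = a := by module
  have : (2⁻¹ : ℝ) • c ≤ 0 := hdisj (x := ⟨_, hhalf0, hhalfc.trans hc.2⟩) hhalfa hhalfc
  simpa using le_antisymm this hhalf0

namespace IsStarProjection

theorem mul_right_and_mul_left_of_le_of_le_one {p d : A} (hp : IsStarProjection p)
    (hpd : p ≤ d) (hd : d ≤ 1) : d * p = p ∧ p * d = p := by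
  obtain ⟨h₁, h₂⟩ := hp.one_sub.mul_right_and_mul_left_of_nonneg_of_le (sub_nonneg.mpr hd)
    (sub_le_sub_left hpd 1)
  constructor
  · calc d * p = p + ((1 - d) * (1 - p) - (1 - d)) := by noncomm_ring
      _ = p := by rw [h₁, sub_self, add_zero]
  · calc p * d = p + ((1 - p) * (1 - d) - (1 - d)) := by noncomm_ring
      _ = p := by rw [h₂, sub_self, add_zero]

theorem hasRelCompl {p : A} (hp : IsStarProjection p) :
    HasRelCompl (⟨p, hp.mem_Icc⟩ : Icc (0 : A) 1) := by
  rintro ⟨d, hd0, hd1⟩ (hpd : p ≤ d)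
  obtain ⟨hdp, hpd'⟩ := hp.mul_right_and_mul_left_of_le_of_le_one hpd hd1
  have hcp : (d - p) * p = 0 := by rw [sub_mul, hdp, hp.isIdempotentElem.eq, sub_self]
  have hpc : p * (d - p) = 0 := by rw [mul_sub, hpd', hp.isIdempotentElem.eq, sub_self]
  refine ⟨⟨d - p, sub_nonneg.mpr hpd, (sub_le_self d hp.nonneg).trans hd1⟩, ?_, ?_, ?_⟩
  · rintro ⟨x, hx0, -⟩ (hxp : x ≤ p) (hxc : x ≤ d - p)
    show x ≤ 0
    calc x = p * x * p := (hp.conjugate_of_nonneg_of_le hx0 hxp).symm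
      _ ≤ p * (d - p) * p := hp.isSelfAdjoint.conjugate_le_conjugate hxc
      _ = 0 := by rw [hpc, zero_mul]
  · rintro _ (rfl | rfl)
    · exact hpd
    · exact sub_le_self d hp.nonneg
  · intro e hub
    have hpe : p ≤ e := hub (mem_insert _ _)
    have hce : d - p ≤ e := hub (mem_insert_of_mem _ rfl)
    obtain ⟨hep, hpe'⟩ := hp.mul_right_and_mul_left_of_le_of_le_one hpe e.2.2
    show d ≤ e
    have : d - p ≤ e - p := calc
      d - p = (1 - p) * (d - p) * (1 - p) := by
        rw [sub_mul, one_mul, hpc, sub_zero, mul_sub, mul_one, hcp, sub_zero]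
      _ ≤ (1 - p) * e * (1 - p) := hp.one_sub.isSelfAdjoint.conjugate_le_conjugate hce
      _ = e - p := by
        rw [sub_mul, one_mul, hpe', mul_sub, mul_one, sub_mul, hep, hp.isIdempotentElem.eq]
        abel
    exact sub_le_sub_iff_right p |>.mp this

theorem of_hasRelCompl {a : A} (ha : a ∈ Icc (0 : A) 1)
    (h : HasRelCompl (⟨a, ha⟩ : Icc (0 : A) 1)) : IsStarProjection a := by
  have hsa : IsSelfAdjoint a := .of_nonneg ha.1
  have hsq : a * a ≤ a := by simpa [sq] using CStarAlgebra.pow_antitone ha.1 ha.2 one_le_two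
  set d := a + (a - a * a) with hd
  have had : a ≤ d := le_add_of_nonneg_right (sub_nonneg.mpr hsq)
  have hd1 : d ≤ 1 := by
    have : 0 ≤ star (1 - a) * (1 - a) := star_mul_self_nonneg _
    rw [star_sub, star_one, hsa.star_eq] at this
    exact sub_nonneg.mp (by convert this using 1; rw [hd]; noncomm_ring)
  have hd2 : d ≤ a + a := by
    have : 0 ≤ star a * a := star_mul_self_nonneg a
    rw [hsa.star_eq] at this
    exact add_le_add le_rfl (sub_le_self a this)
  obtain ⟨⟨c, hc0, hc1⟩, hdisj, hub, hlub⟩ := h ⟨d, ha.1.trans had, hd1⟩ had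
  have hcd : c ≤ d := hub (mem_insert_of_mem _ rfl)
  have hc : c = 0 := eq_zero_of_disjoint_of_le_add_self ha ⟨hc0, hc1⟩ hdisj (hcd.trans hd2)
  have hda : d ≤ a := by
    refine hlub (a := ⟨a, ha⟩) ?_
    rintro _ (rfl | rfl)
    exacts [le_rfl, hc ▸ ha.1]
  refine ⟨?_, hsa⟩
  have : a - a * a = 0 := by
    simpa [hd] using le_antisymm hda had
  exact (sub_eq_zero.mp this).symm

end IsStarProjection

theorem hasRelCompl_iff_isStarProjection {a : A} (ha : a ∈ Icc (0 : A) 1) :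
    HasRelCompl (⟨a, ha⟩ : Icc (0 : A) 1) ↔ IsStarProjection a :=
  ⟨IsStarProjection.of_hasRelCompl ha, IsStarProjection.hasRelCompl⟩

end CStarAlgebra

theorem Set.BijOn.bijOn_of_apply_mem_iff {α : Type*} {f : α → α} {s t : Set α}
    (h : BijOn f s s) (hts : t ⊆ s) (hf : ∀ x ∈ s, f x ∈ t ↔ x ∈ t) : BijOn f t t := by
  have := h.inter_mapsTo (fun x hx => (hf x (hts hx)).mpr hx) fun x hx => (hf x hx.1).mp hx.2
  rwa [inter_eq_right.mpr hts] at this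

/-- an order automorphism of the effect algebra maps the set of
projections bijectively onto itself. -/
theorem orderAuto_bijOn_projections
    {H : Type} [NormedAddCommGroup H] [InnerProductSpace ℂ H] [CompleteSpace H]
    (φ : (H →L[ℂ] H) → (H →L[ℂ] H))
    (hbij : Set.BijOn φ {E | IsEffect E} {E | IsEffect E})
    (horder : ∀ E F : H →L[ℂ] H, IsEffect E → IsEffect F → (E ≤ F ↔ φ E ≤ φ F)) :
    Set.BijOn φ {P | IsOrthogonalProjection P} {P | IsOrthogonalProjection P} := by
  have hproj (E) (hE : IsEffect E) :
      IsOrthogonalProjection E ↔ HasRelCompl (⟨E, hE⟩ : Icc (0 : H →L[ℂ] H) 1) :=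
    (isStarProjection_iff E).symm.trans (hasRelCompl_iff_isStarProjection hE).symm
  let e : Icc (0 : H →L[ℂ] H) 1 ≃o Icc (0 : H →L[ℂ] H) 1 :=
    hbij.orderIso fun E hE F hF => (horder E F hE hF).symm
  refine hbij.bijOn_of_apply_mem_iff (fun P hP => ((isStarProjection_iff P).mpr hP).mem_Icc)
    fun E hE => (hproj (φ E) (hbij.mapsTo hE)).trans ?_
  exact (e.hasRelCompl_apply_iff (a := ⟨E, hE⟩)).trans (hproj E hE).symm
end

section
/- Let φ : E(H) → E(H) be an order-preserving (in both directions) bijection, and suppose there exist states D, D' with tr(φ(E)D') = tr(E D) for all effects E. If P is a rank-one projection with tr(PD) ≠ 0 and λ ∈ [0,1], then φ(λP) = λ φ(P). -/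
/-
Effects below a rank-one projection `P` are its multiples `t • P`, so they form a chain. An order
automorphism `φ` of the effects carries this chain onto the effects below `φ P`. A positive
operator `Q` whose interval `[0, Q]` is a chain has its range in a line: for every `x` the operator
`(re ⟪x, Q x⟫)⁻¹ • |Q x⟩⟨Q x|` lies below `Q` (Cauchy–Schwarz), and two such rank-one operators are
comparable only if their vectors are parallel. Hence `φ (λ • P) ≤ φ P` is a real multiple
`t • φ P`, and comparing `tr (φ (λ • P) D') = λ tr (P D)` with `tr (φ P D') = tr (P D) ≠ 0`
gives `t = λ`.
-/

open scoped InnerProductSpace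

/-- A rank-one (orthogonal) projection. -/
def IsRankOneProjection {H : Type} [NormedAddCommGroup H] [InnerProductSpace ℂ H]
    [CompleteSpace H] (P : H →L[ℂ] H) : Prop :=
  IsIdempotentElem P ∧ IsSelfAdjoint P ∧ Module.finrank ℂ (LinearMap.range P.toLinearMap) = 1

/-- The trace of an operator computed along a Hilbert basis. -/
noncomputable def traceAlong {H : Type} [NormedAddCommGroup H] [InnerProductSpace ℂ H]
    [CompleteSpace H] {ι : Type} (b : HilbertBasis ι ℂ H) (T : H →L[ℂ] H) : ℂ :=
  ∑' i, ⟪T (b i), b i⟫_ℂ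

/-- A state: a positive (trace-class) operator of trace one. -/
def IsState {H : Type} [NormedAddCommGroup H] [InnerProductSpace ℂ H] [CompleteSpace H]
    {ι : Type} (b : HilbertBasis ι ℂ H) (D : H →L[ℂ] H) : Prop :=
  0 ≤ D ∧ HasSum (fun i => ⟪D (b i), b i⟫_ℂ) 1

open InnerProductSpace RCLike

section Operators

variable {𝕜 E : Type*} [RCLike 𝕜] [NormedAddCommGroup E] [InnerProductSpace 𝕜 E]

theorem eq_inner_div_smul_of_mem_span_singleton {w z : E} (hz : z ∈ 𝕜 ∙ w) :
    z = (⟪w, z⟫_𝕜 / ((‖w‖ ^ 2 : ℝ) : 𝕜)) • w := by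
  rw [← Submodule.starProjection_singleton, Submodule.starProjection_eq_self_iff.mpr hz]

namespace ContinuousLinearMap

theorem IsPositive.norm_inner_sq_le {T : E →L[𝕜] E} (hT : T.IsPositive) (x y : E) :
    ‖⟪x, T y⟫_𝕜‖ ^ 2 ≤ re ⟪x, T x⟫_𝕜 * re ⟪y, T y⟫_𝕜 := by
  let c : PreInnerProductSpace.Core 𝕜 E :=
    { inner := fun a b => ⟪a, T b⟫_𝕜
      conj_inner_symm := fun a b => by
        simp only [inner_conj_symm, hT.inner_left_eq_inner_right]
      re_inner_nonneg := hT.re_inner_nonneg_right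
      add_left := fun _ _ _ => inner_add_left _ _ _
      smul_left := fun _ _ _ => inner_smul_left _ _ _ }
  have h : ‖⟪x, T y⟫_𝕜‖ * ‖⟪y, T x⟫_𝕜‖ ≤ re ⟪x, T x⟫_𝕜 * re ⟪y, T y⟫_𝕜 :=
    @InnerProductSpace.Core.inner_mul_inner_self_le 𝕜 E _ _ _ c x y
  have hsymm : ‖⟪y, T x⟫_𝕜‖ = ‖⟪x, T y⟫_𝕜‖ := by
    rw [← hT.inner_left_eq_inner_right, norm_inner_symm]
  rwa [hsymm, ← sq] at h

theorem IsPositive.apply_eq_zero_of_re_inner_eq_zero {T : E →L[𝕜] E} (hT : T.IsPositive) {x : E}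
    (hx : re ⟪x, T x⟫_𝕜 = 0) : T x = 0 := by
  have h := hT.norm_inner_sq_le (T x) x
  rw [hx, mul_zero] at h
  simpa using le_antisymm h (sq_nonneg _)

theorem apply_eq_zero_of_nonneg_of_le {F Q : E →L[𝕜] E} (hF : 0 ≤ F) (hFQ : F ≤ Q) {x : E}
    (hx : Q x = 0) : F x = 0 := by
  refine ((nonneg_iff_isPositive F).mp hF).apply_eq_zero_of_re_inner_eq_zero
    (le_antisymm ?_ (((nonneg_iff_isPositive F).mp hF).re_inner_nonneg_right x))
  have := (le_def F Q).mp hFQ |>.re_inner_nonneg_right x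
  simpa [inner_sub_right, hx] using this

theorem exists_eq_smul_rankOne_of_range_le {T : E →L[𝕜] E} (hT : T.IsSymmetric) {w : E}
    (h : T.range ≤ 𝕜 ∙ w) : ∃ t : ℝ, T = (t : 𝕜) • rankOne 𝕜 w w := by
  have hmem (y : E) : T y ∈ 𝕜 ∙ w := h ⟨y, rfl⟩
  have hsymm (x y : E) : ⟪T x, y⟫_𝕜 = ⟪x, T y⟫_𝕜 := hT x y
  refine ⟨re ⟪T w, w⟫_𝕜 / ‖w‖ ^ 4, ext fun x => ?_⟩
  have hTw : ⟪T w, x⟫_𝕜 = (re ⟪T w, w⟫_𝕜 / ‖w‖ ^ 2 : ℝ) * ⟪w, x⟫_𝕜 := by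
    conv_lhs => rw [eq_inner_div_smul_of_mem_span_singleton (hmem w)]
    have hre : (re ⟪T w, w⟫_𝕜 : 𝕜) = ⟪T w, w⟫_𝕜 := hT.coe_re_inner_apply_self w
    rw [inner_smul_left, ← hsymm w w, ← hre, map_div₀, conj_ofReal, conj_ofReal]
    push_cast
    ring
  rw [eq_inner_div_smul_of_mem_span_singleton (hmem x), ← hsymm w x, hTw, smul_apply,
    rankOne_apply, smul_smul]
  congr 1
  push_cast
  ring

theorem range_le_of_nonneg_of_le {F Q : E →L[𝕜] E} (hF : 0 ≤ F) (hFQ : F ≤ Q)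
    {K : Submodule 𝕜 E} [K.HasOrthogonalProjection] (hQ : Q.range ≤ K) : F.range ≤ K := by
  have hQpos : Q.IsPositive := (nonneg_iff_isPositive Q).mp (hF.trans hFQ)
  have hFpos : F.IsPositive := (nonneg_iff_isPositive F).mp hF
  rintro _ ⟨x, rfl⟩
  rw [← K.orthogonal_orthogonal, Submodule.mem_orthogonal]
  intro y hy
  have hQy : Q y = 0 := by
    rw [← inner_self_eq_zero (𝕜 := 𝕜), hQpos.inner_left_eq_inner_right]
    exact Submodule.inner_left_of_mem_orthogonal (hQ ⟨Q y, rfl⟩) hy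
  change ⟪y, F x⟫_𝕜 = 0
  rw [← hFpos.inner_left_eq_inner_right, apply_eq_zero_of_nonneg_of_le hF hFQ hQy,
    inner_zero_left]

theorem exists_eq_smul_of_mem_Icc {F Q : E →L[𝕜] E} (hF : F ∈ Set.Icc 0 Q) {w : E}
    (hQ : Q.range ≤ 𝕜 ∙ w) : ∃ t : ℝ, F = (t : 𝕜) • Q := by
  have hQpos : Q.IsPositive := (nonneg_iff_isPositive Q).mp (hF.1.trans hF.2)
  obtain ⟨s, hs⟩ := exists_eq_smul_rankOne_of_range_le hQpos.isSymmetric hQ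
  obtain ⟨t, ht⟩ := exists_eq_smul_rankOne_of_range_le
    ((nonneg_iff_isPositive F).mp hF.1).isSymmetric (range_le_of_nonneg_of_le hF.1 hF.2 hQ)
  by_cases hs0 : s = 0
  · have hQ0 : Q = 0 := by simp [hs, hs0]
    exact ⟨0, by simpa [hQ0] using le_antisymm (hQ0 ▸ hF.2) hF.1⟩
  · have hs0' : (s : 𝕜) ≠ 0 := ofReal_ne_zero.mpr hs0
    refine ⟨t / s, ?_⟩
    rw [ht, hs, smul_smul]
    congr 1
    push_cast
    field_simp

theorem isChain_Icc_of_range_le_span_singleton {Q : E →L[𝕜] E} {w : E}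
    (hQ : Q.range ≤ 𝕜 ∙ w) : IsChain (· ≤ ·) (Set.Icc 0 Q) := by
  intro F hF G hG _
  obtain ⟨s, rfl⟩ := exists_eq_smul_of_mem_Icc hF hQ
  obtain ⟨t, rfl⟩ := exists_eq_smul_of_mem_Icc hG hQ
  have hQpos : Q.IsPositive := (nonneg_iff_isPositive Q).mp (hF.1.trans hF.2)
  have key {a b : ℝ} (hab : a ≤ b) : (a : 𝕜) • Q ≤ (b : 𝕜) • Q := by
    rw [le_def, ← sub_smul, ← ofReal_sub]
    exact hQpos.smul_of_nonneg (ofReal_nonneg.mpr (sub_nonneg.mpr hab))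
  exact (le_total s t).imp key key

theorem re_inner_smul_rankOne_self_apply (t : ℝ) (a y : E) :
    re ⟪((t : 𝕜) • rankOne 𝕜 a a) y, y⟫_𝕜 = t * ‖⟪a, y⟫_𝕜‖ ^ 2 := by
  rw [smul_apply, rankOne_apply, inner_smul_left, inner_smul_left, conj_ofReal, RCLike.conj_mul]
  norm_cast

theorem inv_re_inner_smul_rankOne_le {Q : E →L[𝕜] E} (hQ : Q.IsPositive) (x : E) :
    (((re ⟪x, Q x⟫_𝕜)⁻¹ : ℝ) : 𝕜) • rankOne 𝕜 (Q x) (Q x) ≤ Q := by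
  rw [le_def]
  refine ⟨hQ.isSymmetric.sub ((isSymmetric_rankOne_self (Q x)).smul ?_), fun y => ?_⟩
  · exact conj_ofReal _
  rw [reApplyInnerSelf_apply, sub_apply, inner_sub_left, map_sub,
    re_inner_smul_rankOne_self_apply, sub_nonneg, hQ.inner_left_eq_inner_right,
    hQ.inner_left_eq_inner_right]
  have hCS := hQ.norm_inner_sq_le x y
  rcases (hQ.re_inner_nonneg_right x).eq_or_lt with h0 | hpos
  · rw [← h0, inv_zero, zero_mul]
    exact hQ.re_inner_nonneg_right y
  · rwa [inv_mul_le_iff₀ hpos]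

theorem mem_span_singleton_of_smul_rankOne_le {a b : E} {s t : ℝ} (hs : 0 < s)
    (h : (s : 𝕜) • rankOne 𝕜 a a ≤ (t : 𝕜) • rankOne 𝕜 b b) : a ∈ 𝕜 ∙ b := by
  rw [← (𝕜 ∙ b).orthogonal_orthogonal]
  intro y hy
  have hby : ⟪b, y⟫_𝕜 = 0 :=
    Submodule.inner_right_of_mem_orthogonal (Submodule.mem_span_singleton_self b) hy
  have hquad := ((le_def _ _).mp h).re_inner_nonneg_left y
  rw [sub_apply, inner_sub_left, map_sub, re_inner_smul_rankOne_self_apply,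
    re_inner_smul_rankOne_self_apply, hby, norm_zero] at hquad
  have hay : ‖⟪a, y⟫_𝕜‖ ^ 2 = 0 := by nlinarith [sq_nonneg ‖⟪a, y⟫_𝕜‖]
  rw [inner_eq_zero_symm]
  simpa using hay

theorem exists_range_le_span_singleton_of_isChain {Q : E →L[𝕜] E} (hQ : 0 ≤ Q)
    (hchain : IsChain (· ≤ ·) (Set.Icc 0 Q)) : ∃ v : E, Q.range ≤ 𝕜 ∙ v := by
  have hQpos := (nonneg_iff_isPositive Q).mp hQ
  rcases eq_or_ne Q 0 with rfl | hQ0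
  · exact ⟨0, by simp⟩
  obtain ⟨x₀, hx₀⟩ := DFunLike.ne_iff.mp hQ0
  let A (x : E) : E →L[𝕜] E := (((re ⟪x, Q x⟫_𝕜)⁻¹ : ℝ) : 𝕜) • rankOne 𝕜 (Q x) (Q x)
  have hA (x : E) : A x ∈ Set.Icc 0 Q :=
    ⟨(nonneg_iff_isPositive _).mpr <| (isPositive_rankOne_self _).smul_of_nonneg <|
      ofReal_nonneg.mpr (inv_nonneg.mpr (hQpos.re_inner_nonneg_right x)),
      inv_re_inner_smul_rankOne_le hQpos x⟩
  have hpos {x : E} (hx : Q x ≠ 0) : 0 < (re ⟪x, Q x⟫_𝕜)⁻¹ :=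
    inv_pos.mpr <| (hQpos.re_inner_nonneg_right x).lt_of_ne'
      (mt hQpos.apply_eq_zero_of_re_inner_eq_zero hx)
  refine ⟨Q x₀, ?_⟩
  rintro _ ⟨x, rfl⟩
  change Q x ∈ 𝕜 ∙ Q x₀
  by_cases hx : Q x = 0
  · simp [hx]
  rcases hchain.total (hA x) (hA x₀) with h | h
  · exact mem_span_singleton_of_smul_rankOne_le (hpos hx) h
  · obtain ⟨c, hc⟩ :=
      Submodule.mem_span_singleton.mp (mem_span_singleton_of_smul_rankOne_le (hpos hx₀) h)
    have hc0 : c ≠ 0 := by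
      rintro rfl
      exact hx₀ (by simpa using hc.symm)
    exact Submodule.mem_span_singleton.mpr
      ⟨c⁻¹, by rw [← hc, smul_smul, inv_mul_cancel₀ hc0, one_smul]⟩

end ContinuousLinearMap

end Operators

theorem isChain_inter_Iic_of_surjOn {α β : Type*} [Preorder α] [Preorder β] {s : Set α}
    {t : Set β} {f : α → β} (hf : Set.SurjOn f s t)
    (hle : ∀ a b, a ∈ s → b ∈ s → (a ≤ b ↔ f a ≤ f b)) {x : α} (hx : x ∈ s)
    (h : IsChain (· ≤ ·) (s ∩ Set.Iic x)) : IsChain (· ≤ ·) (t ∩ Set.Iic (f x)) := by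
  rintro _ ⟨hy₁, hy₁x⟩ _ ⟨hy₂, hy₂x⟩ -
  obtain ⟨a₁, ha₁, rfl⟩ := hf hy₁
  obtain ⟨a₂, ha₂, rfl⟩ := hf hy₂
  exact (h.total ⟨ha₁, (hle _ _ ha₁ hx).mpr hy₁x⟩ ⟨ha₂, (hle _ _ ha₂ hx).mpr hy₂x⟩).imp
    (hle _ _ ha₁ ha₂).mp (hle _ _ ha₂ ha₁).mp

section Effects

variable {H : Type} [NormedAddCommGroup H] [InnerProductSpace ℂ H] [CompleteSpace H]

theorem traceAlong_smul {ι : Type} (b : HilbertBasis ι ℂ H) (c : ℂ) (T : H →L[ℂ] H) :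
    traceAlong b (c • T) = starRingEnd ℂ c * traceAlong b T := by
  simp only [traceAlong, smul_apply, inner_smul_left, tsum_mul_left]

theorem IsRankOneProjection.isEffect {P : H →L[ℂ] H} (hP : IsRankOneProjection P) :
    IsEffect P :=
  ((isStarProjection_iff P).mpr ⟨hP.1, hP.2.1⟩).mem_Icc

theorem IsRankOneProjection.exists_range_le {P : H →L[ℂ] H} (hP : IsRankOneProjection P) :
    ∃ v : H, P.range ≤ ℂ ∙ v := by
  obtain ⟨v, -, hv⟩ := finrank_eq_one_iff'.mp hP.2.2
  refine ⟨v, fun y hy => ?_⟩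
  obtain ⟨c, hc⟩ := hv ⟨y, hy⟩
  exact Submodule.mem_span_singleton.mpr ⟨c, congrArg Subtype.val hc⟩

end Effects

theorem orderAuto_homogeneous_on_weak_atoms_general
    {H : Type} [NormedAddCommGroup H] [InnerProductSpace ℂ H] [CompleteSpace H]
    {ι : Type} (b : HilbertBasis ι ℂ H)
    (φ : (H →L[ℂ] H) → (H →L[ℂ] H))
    (hbij : Set.BijOn φ {E | IsEffect E} {E | IsEffect E})
    (horder : ∀ E F : H →L[ℂ] H, IsEffect E → IsEffect F → (E ≤ F ↔ φ E ≤ φ F))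
    (D D' : H →L[ℂ] H)
    (htr : ∀ E : H →L[ℂ] H, IsEffect E → traceAlong b (φ E * D') = traceAlong b (E * D))
    (P : H →L[ℂ] H) (hP : IsRankOneProjection P)
    (hPD : traceAlong b (P * D) ≠ 0)
    (lam : ℝ) (hlam : lam ∈ Set.Icc (0:ℝ) 1) :
    φ ((lam : ℂ) • P) = (lam : ℂ) • φ P := by
  have hPeff := hP.isEffect
  have hlamP : (lam : ℂ) • P ∈ Set.Icc 0 P := by
    rw [Complex.coe_smul]
    exact ⟨smul_nonneg hlam.1 hPeff.1, smul_le_of_le_one_left hPeff.1 hlam.2⟩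
  have hlamPeff : IsEffect ((lam : ℂ) • P) := ⟨hlamP.1, hlamP.2.trans hPeff.2⟩
  have hφPeff : IsEffect (φ P) := hbij.mapsTo hPeff
  obtain ⟨v, hv⟩ : ∃ v : H, (φ P).range ≤ ℂ ∙ v := by
    obtain ⟨u, hu⟩ := hP.exists_range_le
    have hbelowP : {E | IsEffect E} ∩ Set.Iic P ⊆ Set.Icc 0 P := fun E hE => ⟨hE.1.1, hE.2⟩
    have hbelowφP : Set.Icc 0 (φ P) ⊆ {E | IsEffect E} ∩ Set.Iic (φ P) :=
      fun F hF => ⟨⟨hF.1, hF.2.trans hφPeff.2⟩, hF.2⟩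
    have hchain := isChain_inter_Iic_of_surjOn hbij.surjOn horder hPeff
      ((ContinuousLinearMap.isChain_Icc_of_range_le_span_singleton hu).mono hbelowP)
    exact ContinuousLinearMap.exists_range_le_span_singleton_of_isChain hφPeff.1
      (hchain.mono hbelowφP)
  obtain ⟨t, ht⟩ : ∃ t : ℝ, φ ((lam : ℂ) • P) = (t : ℂ) • φ P :=
    ContinuousLinearMap.exists_eq_smul_of_mem_Icc
      ⟨(hbij.mapsTo hlamPeff).1, (horder _ _ hlamPeff hPeff).mp hlamP.2⟩ hv
  have htrace : (t : ℂ) * traceAlong b (P * D) = lam * traceAlong b (P * D) :=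
    calc (t : ℂ) * traceAlong b (P * D) = traceAlong b (((t : ℂ) • φ P) * D') := by
          rw [smul_mul_assoc, traceAlong_smul, Complex.conj_ofReal, htr P hPeff]
      _ = traceAlong b (((lam : ℂ) • P) * D) := by rw [← ht, htr _ hlamPeff]
      _ = lam * traceAlong b (P * D) := by
          rw [smul_mul_assoc, traceAlong_smul, Complex.conj_ofReal]
  rw [ht, mul_right_cancel₀ hPD htrace]

/-- if an order automorphism `φ` of `E(H)` preserves the probability with
respect to states `D`, `D'`, then `φ(λP) = λφ(P)` for every rank-one projection `P` with
`tr(PD) ≠ 0` and every `λ ∈ [0,1]`. -/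
theorem orderAuto_homogeneous_on_weak_atoms
    {H : Type} [NormedAddCommGroup H] [InnerProductSpace ℂ H] [CompleteSpace H]
    {ι : Type} (b : HilbertBasis ι ℂ H)
    (φ : (H →L[ℂ] H) → (H →L[ℂ] H))
    (hbij : Set.BijOn φ {E | IsEffect E} {E | IsEffect E})
    (horder : ∀ E F : H →L[ℂ] H, IsEffect E → IsEffect F → (E ≤ F ↔ φ E ≤ φ F))
    (D D' : H →L[ℂ] H) (hD : IsState b D) (hD' : IsState b D')
    (htr : ∀ E : H →L[ℂ] H, IsEffect E → traceAlong b (φ E * D') = traceAlong b (E * D))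
    (P : H →L[ℂ] H) (hP : IsRankOneProjection P)
    (hPD : traceAlong b (P * D) ≠ 0)
    (lam : ℝ) (hlam : lam ∈ Set.Icc (0:ℝ) 1) :
    φ ((lam : ℂ) • P) = (lam : ℂ) • φ P :=
  orderAuto_homogeneous_on_weak_atoms_general b φ hbij horder D D' htr P hP hPD lam hlam
end

section
/- Let E be an effect on H with λI ≤ E ≤ μI for 0 < λ < μ ≤ 1, and let P be a rank-one projection such that the strength of E along P equals λ. Then the range of P is contained in the eigenspace ker(E − λI) of E corresponding to the eigenvalue λ. -/
open scoped InnerProductSpace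

/-- The strength of an effect `E` along a rank-one projection `Q`:
`sup {t ∈ [0,1] : tQ ≤ E}`. -/
noncomputable def strength {H : Type} [NormedAddCommGroup H] [InnerProductSpace ℂ H]
    [CompleteSpace H] (E Q : H →L[ℂ] H) : ℝ :=
  sSup {t : ℝ | t ∈ Set.Icc (0:ℝ) 1 ∧ (t : ℂ) • Q ≤ E}

/-!
Since `E - λ ≥ 0`, write `E = λ + S⋆S`, and write `P` as the projection onto a unit vector `u`.
Splitting `x = ⟪u, x⟫ u + w` with `w ⊥ u`, the triangle inequality
`‖S x‖ ≥ |‖⟪u, x⟫‖ ‖S u‖ - ‖S w‖|` and the bound `‖S w‖² ≤ (μ - λ) ‖w‖²` coming from `E ≤ μ`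
give `λ (1 + ‖S u‖² / μ) P ≤ E`. As the strength of `E` along `P` is `λ > 0`, this forces
`S u = 0`, that is `E u = λ u`.
-/

open RCLike

/-- With `K = mu - lam`, this is `(K a - mu b)² ≥ 0` combined with `b² ≤ K w²` and
`(a - b)² ≤ z²`. -/
theorem mul_sq_le_of_abs_sub_le {lam mu a b w z : ℝ} (hlam : 0 ≤ lam) (hlm : lam < mu)
    (hb : b ^ 2 ≤ (mu - lam) * w ^ 2) (hz : |a - b| ≤ z) :
    lam * a ^ 2 ≤ mu * (lam * w ^ 2 + z ^ 2) := by
  have hK : 0 < mu - lam := sub_pos.mpr hlm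
  have hz2 : (a - b) ^ 2 ≤ z ^ 2 := sq_le_sq' (neg_le_of_abs_le hz) (le_of_abs_le hz)
  refine le_of_mul_le_mul_left ?_ hK
  nlinarith [sq_nonneg ((mu - lam) * a - mu * b), mul_le_mul_of_nonneg_left hb hlam,
    mul_le_mul_of_nonneg_left hz2 (mul_nonneg hK.le (hlam.trans hlm.le))]

theorem mul_one_add_div_le {lam mu c : ℝ} (hlam : 0 ≤ lam) (hmu : 0 < mu)
    (hc : c ≤ mu - lam) : lam * (1 + c / mu) ≤ mu := by
  have : lam * c / mu ≤ mu - lam := by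
    rw [div_le_iff₀ hmu]
    nlinarith [mul_le_mul_of_nonneg_left hc hlam, sq_nonneg (mu - lam)]
  linear_combination this

namespace ContinuousLinearMap

section RCLike

variable {𝕜 H : Type*} [RCLike 𝕜] [NormedAddCommGroup H] [InnerProductSpace 𝕜 H]

theorem re_inner_apply_le_of_le {A B : H →L[𝕜] H} (h : A ≤ B) (x : H) :
    re ⟪A x, x⟫_𝕜 ≤ re ⟪B x, x⟫_𝕜 := by
  simpa [inner_sub_left] using h.re_inner_nonneg_left x

theorem le_of_forall_re_inner_le [CompleteSpace H] {A B : H →L[𝕜] H} (hA : IsSelfAdjoint A)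
    (hB : IsSelfAdjoint B) (h : ∀ x, re ⟪A x, x⟫_𝕜 ≤ re ⟪B x, x⟫_𝕜) : A ≤ B := by
  refine isPositive_def'.mpr ⟨hB.sub hA, fun x ↦ ?_⟩
  simpa [reApplyInnerSelf_apply, inner_sub_left] using h x

end RCLike

variable {H : Type*} [NormedAddCommGroup H] [InnerProductSpace ℂ H]

theorem re_inner_ofReal_smul_one_apply (r : ℝ) (x : H) :
    re ⟪((r : ℂ) • (1 : H →L[ℂ] H)) x, x⟫_ℂ = r * ‖x‖ ^ 2 := by
  simp [inner_self_eq_norm_sq_to_K, ← Complex.ofReal_pow]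

variable [CompleteSpace H]

theorem re_inner_ofReal_smul_one_add_star_mul_self_apply (r : ℝ) (S : H →L[ℂ] H) (x : H) :
    re ⟪((r : ℂ) • 1 + star S * S) x, x⟫_ℂ = r * ‖x‖ ^ 2 + ‖S x‖ ^ 2 := by
  rw [add_apply, inner_add_left, map_add, re_inner_ofReal_smul_one_apply, mul_apply_eq_comp,
    star_eq_adjoint, adjoint_inner_left, inner_self_eq_norm_sq]

theorem norm_apply_sq_le_of_add_star_mul_self_le {S : H →L[ℂ] H} {lam mu : ℝ}
    (h : (lam : ℂ) • 1 + star S * S ≤ (mu : ℂ) • 1) (x : H) :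
    ‖S x‖ ^ 2 ≤ (mu - lam) * ‖x‖ ^ 2 := by
  have := re_inner_apply_le_of_le h x
  rw [re_inner_ofReal_smul_one_add_star_mul_self_apply, re_inner_ofReal_smul_one_apply] at this
  linarith

theorem ofReal_smul_starProjection_le_add_star_mul_self {S : H →L[ℂ] H} {lam mu : ℝ}
    (hlam : 0 ≤ lam) (hlm : lam < mu) (hupp : (lam : ℂ) • 1 + star S * S ≤ (mu : ℂ) • 1)
    {u : H} (hu : ‖u‖ = 1) :
    ((lam * (1 + ‖S u‖ ^ 2 / mu) : ℝ) : ℂ) • (ℂ ∙ u).starProjection ≤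
      (lam : ℂ) • 1 + star S * S := by
  have hreal (t : ℝ) : IsSelfAdjoint (t : ℂ) := (Complex.im_eq_zero_iff_isSelfAdjoint _).mp rfl
  refine le_of_forall_re_inner_le ((hreal _).smul (isSelfAdjoint_starProjection _))
    (((hreal _).smul (.one _)).add (.star_mul_self S)) fun x ↦ ?_
  set a := ⟪u, x⟫_ℂ
  have hp : (ℂ ∙ u).starProjection x = a • u := Submodule.starProjection_unit_singleton ℂ hu x
  have hpyth : ‖x‖ ^ 2 = ‖a‖ ^ 2 + ‖x - a • u‖ ^ 2 := by
    simpa [hp, norm_smul, hu] using Submodule.norm_sq_eq_add_norm_sq_starProjection x (ℂ ∙ u)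
  have hSx : |‖a‖ * ‖S u‖ - ‖S (x - a • u)‖| ≤ ‖S x‖ := by
    simpa [norm_smul, norm_sub_rev] using abs_norm_sub_norm_le (S (a • u)) (-S (x - a • u))
  have hgain : lam * ‖S u‖ ^ 2 / mu * ‖a‖ ^ 2 ≤ lam * ‖x - a • u‖ ^ 2 + ‖S x‖ ^ 2 := by
    rw [div_mul_eq_mul_div, div_le_iff₀ (hlam.trans_lt hlm)]
    linarith [mul_sq_le_of_abs_sub_le hlam hlm
      (norm_apply_sq_le_of_add_star_mul_self_le hupp (x - a • u)) hSx]
  rw [re_inner_ofReal_smul_one_add_star_mul_self_apply, smul_apply, hp, inner_smul_left,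
    inner_smul_left, Complex.conj_ofReal, Complex.conj_mul', ← Complex.ofReal_pow,
    ← Complex.ofReal_mul, re_to_complex, Complex.ofReal_re, hpyth]
  linear_combination hgain

end ContinuousLinearMap

theorem IsRankOneProjection.exists_eq_starProjection {H : Type} [NormedAddCommGroup H]
    [InnerProductSpace ℂ H] [CompleteSpace H] {P : H →L[ℂ] H} (hP : IsRankOneProjection P) :
    ∃ u : H, ‖u‖ = 1 ∧ P = (ℂ ∙ u).starProjection := by
  obtain ⟨hidem, hsa, hrank⟩ := hP
  obtain ⟨⟨v, hv⟩, hv0, hspan⟩ := finrank_eq_one_iff'.mp hrank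
  have hv0 : v ≠ 0 := by simpa using hv0
  have hrange : P.range = ℂ ∙ ((‖v‖⁻¹ : ℂ) • v) := by
    rw [Submodule.span_singleton_smul_eq (by simpa using hv0)]
    refine le_antisymm (fun z hz ↦ ?_) ((Submodule.span_singleton_le_iff_mem _ _).mpr hv)
    obtain ⟨c, hc⟩ := hspan ⟨z, hz⟩
    exact Submodule.mem_span_singleton.mpr ⟨c, congrArg Subtype.val hc⟩
  obtain ⟨_, hP⟩ := isStarProjection_iff_eq_starProjection_range.mp ⟨hidem, hsa⟩
  exact ⟨_, by simp [norm_smul, hv0], hP.trans (Submodule.starProjection_inj.mpr hrange)⟩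

theorem le_strength {H : Type} [NormedAddCommGroup H] [InnerProductSpace ℂ H] [CompleteSpace H]
    {E Q : H →L[ℂ] H} {t : ℝ} (ht : t ∈ Set.Icc (0 : ℝ) 1) (hQ : (t : ℂ) • Q ≤ E) :
    t ≤ strength E Q :=
  le_csSup ⟨1, fun _ hs ↦ hs.1.2⟩ ⟨ht, hQ⟩

theorem range_subset_eigenspace_of_strength_eq_general
    {H : Type} [NormedAddCommGroup H] [InnerProductSpace ℂ H] [CompleteSpace H]
    (E : H →L[ℂ] H)
    (lam mu : ℝ) (hlam : 0 < lam) (hlm : lam < mu) (hmu : mu ≤ 1)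
    (hlow : (lam : ℂ) • (1 : H →L[ℂ] H) ≤ E) (hupp : E ≤ (mu : ℂ) • (1 : H →L[ℂ] H))
    (P : H →L[ℂ] H) (hP : IsRankOneProjection P)
    (hstr : strength E P = lam) :
    ∀ x : H, E (P x) = (lam : ℂ) • P x := by
  obtain ⟨u, hu, rfl⟩ := hP.exists_eq_starProjection
  obtain ⟨S, hS⟩ := CStarAlgebra.nonneg_iff_eq_star_mul_self.mp (sub_nonneg.mpr hlow)
  obtain rfl : E = (lam : ℂ) • 1 + star S * S := sub_eq_iff_eq_add'.mp hS
  have hmu0 : 0 < mu := hlam.trans hlm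
  have hSu : ‖S u‖ ^ 2 ≤ mu - lam := by
    simpa [hu] using ContinuousLinearMap.norm_apply_sq_le_of_add_star_mul_self_le hupp u
  have ht : lam * (1 + ‖S u‖ ^ 2 / mu) ∈ Set.Icc (0 : ℝ) 1 :=
    ⟨by positivity, (mul_one_add_div_le hlam.le hmu0 hSu).trans hmu⟩
  have hle := le_strength ht
    (ContinuousLinearMap.ofReal_smul_starProjection_le_add_star_mul_self hlam.le hlm hupp hu)
  rw [hstr] at hle
  have hSu0 : S u = 0 := by
    have h : ‖S u‖ ^ 2 / mu ≤ 0 := by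
      linarith [(mul_le_iff_le_one_right hlam).mp hle]
    rw [div_le_iff₀ hmu0, zero_mul] at h
    simpa using h
  intro x
  simp only [Complex.coe_smul, Submodule.starProjection_unit_singleton ℂ hu, map_smul, add_apply,
    smul_apply, one_apply_eq_self, mul_apply_eq_comp, hSu0, map_zero, add_zero]
  exact smul_comm _ _ _

/-- if `λI ≤ E ≤ μI` with `0 < λ < μ ≤ 1` and the strength of `E` along a
rank-one projection `P` equals `λ`, then the range of `P` lies in the eigenspace
`ker(E − λI)` of `E`, i.e. `E(Px) = λ Px` for all `x`. -/
theorem range_subset_eigenspace_of_strength_eq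
    {H : Type} [NormedAddCommGroup H] [InnerProductSpace ℂ H] [CompleteSpace H]
    (E : H →L[ℂ] H) (hE : IsEffect E)
    (lam mu : ℝ) (hlam : 0 < lam) (hlm : lam < mu) (hmu : mu ≤ 1)
    (hlow : (lam : ℂ) • (1 : H →L[ℂ] H) ≤ E) (hupp : E ≤ (mu : ℂ) • (1 : H →L[ℂ] H))
    (P : H →L[ℂ] H) (hP : IsRankOneProjection P)
    (hstr : strength E P = lam) :
    ∀ x : H, E (P x) = (lam : ℂ) • P x :=
  range_subset_eigenspace_of_strength_eq_general E lam mu hlam hlm hmu hlow hupp P hP hstr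
end

section
/- Let dim H ≥ 3 and let φ : E(H) → E(H) be an order-preserving (in both directions) bijection such that φ(λP) = U(λP)U* for all rank-one projections P and λ ∈ [0,1], where U is a fixed unitary or antiunitary operator. Then φ(E) = UEU* for all effects E. -/
open scoped InnerProductSpace
open ContinuousLinearMap

/-- An antiunitary operator: a conjugate-linear bijective map which reverses inner
products (in particular a surjective isometry). -/
def IsAntiunitary {H : Type} [NormedAddCommGroup H] [InnerProductSpace ℂ H]
    [CompleteSpace H] (f : H → H) : Prop :=
  Function.Bijective f ∧ (∀ x y : H, f (x + y) = f x + f y) ∧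
    (∀ (c : ℂ) (x : H), f (c • x) = (starRingEnd ℂ c) • f x) ∧
    ∀ x y : H, ⟪f x, f y⟫_ℂ = ⟪y, x⟫_ℂ

/-- `ψ` is conjugation `X ↦ U X U*` by a fixed unitary or antiunitary operator `U`. -/
def IsUnitaryOrAntiunitaryConjugation {H : Type} [NormedAddCommGroup H]
    [InnerProductSpace ℂ H] [CompleteSpace H]
    (ψ : (H →L[ℂ] H) → (H →L[ℂ] H)) : Prop :=
  (∃ U : H →L[ℂ] H, U ∘L adjoint U = 1 ∧ adjoint U ∘L U = 1 ∧
      ∀ X : H →L[ℂ] H, ψ X = U ∘L X ∘L adjoint U) ∨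
    (∃ f g : H → H, IsAntiunitary f ∧ Function.LeftInverse g f ∧
      Function.RightInverse g f ∧ ∀ (X : H →L[ℂ] H) (x : H), ψ X x = f (X (g x)))

/-!
An effect `A = T†T` is determined by the weak atoms below it (Busch–Gudder): for every `y`
with `T y ≠ 0`, the operator `‖T y‖⁻² |A y⟩⟨A y| = T† P T`, with `P` the projection onto
`T y`, is a weak atom below `A` that agrees with `A` at `y`. Conjugation `ψ` by a unitary or
antiunitary is an order automorphism of the effects permuting the weak atoms, so for a weak atom
`W = ψ W'` we get `W ≤ φ E ↔ W' ≤ E ↔ W ≤ ψ E`, and therefore `φ E = ψ E`.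
-/

open InnerProductSpace ComplexOrder

section InnerProductSpace

variable {H : Type} [NormedAddCommGroup H] [InnerProductSpace ℂ H]

theorem inner_self_eq_ofReal_norm_sq (x : H) : ⟪x, x⟫_ℂ = ((‖x‖ ^ 2 : ℝ) : ℂ) := by
  simp [inner_self_eq_norm_sq_to_K]

theorem ContinuousLinearMap.isPositive_iff_forall_inner_nonneg (T : H →L[ℂ] H) :
    T.IsPositive ↔ ∀ x, 0 ≤ ⟪T x, x⟫_ℂ := by
  rw [isPositive_iff, LinearMap.isSymmetric_iff_inner_map_self_real]
  exact ⟨And.right, fun h => ⟨fun x => (IsSelfAdjoint.of_nonneg (h x)).star_eq, h⟩⟩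

theorem ContinuousLinearMap.le_iff_forall_inner_le (A B : H →L[ℂ] H) :
    A ≤ B ↔ ∀ x, ⟪A x, x⟫_ℂ ≤ ⟪B x, x⟫_ℂ := by
  simp only [le_def, isPositive_iff_forall_inner_nonneg, sub_apply, inner_sub_left, sub_nonneg]

theorem exists_norm_eq_one_rankOne_self_eq {v : H} (hv : v ≠ 0) :
    ∃ e : H, ‖e‖ = 1 ∧ rankOne ℂ v v = ((‖v‖ ^ 2 : ℝ) : ℂ) • rankOne ℂ e e := by
  refine ⟨(‖v‖⁻¹ : ℂ) • v, by simp [norm_smul, norm_ne_zero_iff.mpr hv], ?_⟩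
  ext x
  simp only [rankOne_apply, smul_apply, inner_smul_left, smul_smul, map_inv₀, Complex.conj_ofReal]
  congr 1
  push_cast
  field_simp

def IsWeakAtom (W : H →L[ℂ] H) : Prop :=
  ∃ lam ∈ Set.Icc (0 : ℝ) 1, ∃ e : H, ‖e‖ = 1 ∧ W = (lam : ℂ) • rankOne ℂ e e

theorem isWeakAtom_ofReal_smul_rankOne_self_of_le_one {c : ℝ} (hc : 0 ≤ c) {v : H} (hv : v ≠ 0)
    (h : (c : ℂ) • rankOne ℂ v v ≤ 1) : IsWeakAtom ((c : ℂ) • rankOne ℂ v v) := by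
  obtain ⟨e, he, hve⟩ := exists_norm_eq_one_rankOne_self_eq hv
  rw [hve, smul_smul, ← Complex.ofReal_mul] at h ⊢
  refine ⟨c * ‖v‖ ^ 2, ⟨by positivity, ?_⟩, e, he, rfl⟩
  have hee : ⟪e, e⟫_ℂ = 1 := by rw [inner_self_eq_ofReal_norm_sq, he]; norm_num
  have h_e := (le_iff_forall_inner_le _ _).mp h e
  rw [smul_apply, rankOne_apply, hee, one_smul, inner_smul_left, hee, one_apply_eq_self, hee,
    mul_one, Complex.conj_ofReal] at h_e
  exact_mod_cast h_e

theorem RingHom.nonneg_apply_iff_of_map_ofReal {σ : ℂ →+* ℂ} [RingHomInvPair σ σ]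
    (hσ : ∀ r : ℝ, σ r = r) {z : ℂ} : 0 ≤ σ z ↔ 0 ≤ z := by
  have key : ∀ w : ℂ, 0 ≤ w → 0 ≤ σ w := fun w hw => by
    obtain ⟨r, -, rfl⟩ := RCLike.nonneg_iff_exists_ofReal.mp hw
    exact (hσ r).symm ▸ hw
  refine ⟨fun h => ?_, key z⟩
  rw [← RingHomInvPair.comp_apply_eq (σ := σ) (σ' := σ) (x := z)]
  exact key _ h

variable {σ : ℂ →+* ℂ} [RingHomInvPair σ σ] {e : H ≃ₛₗ[σ] H}

theorem LinearEquiv.norm_map_of_inner_map_map (hσ : ∀ r : ℝ, σ r = r)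
    (he : ∀ x y, ⟪e x, e y⟫_ℂ = σ ⟪x, y⟫_ℂ) (x : H) : ‖e x‖ = ‖x‖ := by
  have h := he x x
  rw [inner_self_eq_ofReal_norm_sq, inner_self_eq_ofReal_norm_sq, hσ, Complex.ofReal_inj] at h
  exact (sq_eq_sq₀ (norm_nonneg _) (norm_nonneg _)).mp h

theorem isPositive_iff_of_forall_apply_eq_conj (hσ : ∀ r : ℝ, σ r = r)
    (he : ∀ x y, ⟪e x, e y⟫_ℂ = σ ⟪x, y⟫_ℂ) {Z T : H →L[ℂ] H}
    (hT : ∀ x, T x = e (Z (e.symm x))) : T.IsPositive ↔ Z.IsPositive := by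
  simp only [isPositive_iff_forall_inner_nonneg]
  refine (forall_congr' fun x => ?_).trans e.symm.surjective.forall.symm
  have h := he (Z (e.symm x)) (e.symm x)
  rw [e.apply_symm_apply] at h
  rw [hT, h, RingHom.nonneg_apply_iff_of_map_ofReal hσ]

/-- `σ = id` gives the unitary conjugations, `σ = conj` the antiunitary ones. -/
structure IsSemilinearConjugation (σ : ℂ →+* ℂ) [RingHomInvPair σ σ] (e : H ≃ₛₗ[σ] H)
    (ψ : (H →L[ℂ] H) → (H →L[ℂ] H)) : Prop where
  map_ofReal : ∀ r : ℝ, σ r = r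
  inner_map_map : ∀ x y, ⟪e x, e y⟫_ℂ = σ ⟪x, y⟫_ℂ
  apply_apply : ∀ X x, ψ X x = e (X (e.symm x))

namespace IsSemilinearConjugation

variable {ψ : (H →L[ℂ] H) → (H →L[ℂ] H)}

theorem le_iff (hψ : IsSemilinearConjugation σ e ψ) (X Y : H →L[ℂ] H) : ψ X ≤ ψ Y ↔ X ≤ Y := by
  rw [le_def, le_def]
  exact isPositive_iff_of_forall_apply_eq_conj hψ.map_ofReal hψ.inner_map_map
    fun x => by simp only [sub_apply, hψ.apply_apply, map_sub]

theorem apply_ofReal_smul_rankOne_self (hψ : IsSemilinearConjugation σ e ψ) (c : ℝ) (v : H) :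
    ψ ((c : ℂ) • rankOne ℂ v v) = (c : ℂ) • rankOne ℂ (e v) (e v) := by
  ext x
  have h := hψ.inner_map_map v (e.symm x)
  rw [e.apply_symm_apply] at h
  rw [hψ.apply_apply]
  simp only [smul_apply, rankOne_apply, map_smulₛₗ, hψ.map_ofReal, h]

theorem exists_isWeakAtom_apply_eq (hψ : IsSemilinearConjugation σ e ψ) {W : H →L[ℂ] H}
    (hW : IsWeakAtom W) : ∃ W', IsWeakAtom W' ∧ ψ W' = W := by
  obtain ⟨lam, hlam, v, hv, rfl⟩ := hW
  refine ⟨(lam : ℂ) • rankOne ℂ (e.symm v) (e.symm v), ⟨lam, hlam, e.symm v, ?_, rfl⟩, ?_⟩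
  · rw [← LinearEquiv.norm_map_of_inner_map_map hψ.map_ofReal hψ.inner_map_map,
      e.apply_symm_apply, hv]
  · rw [hψ.apply_ofReal_smul_rankOne_self, e.apply_symm_apply]

end IsSemilinearConjugation

end InnerProductSpace

section HilbertSpace

variable {H : Type} [NormedAddCommGroup H] [InnerProductSpace ℂ H] [CompleteSpace H]

theorem isRankOneProjection_rankOne_self {e : H} (he : ‖e‖ = 1) :
    IsRankOneProjection (rankOne ℂ e e) := by
  have he0 : e ≠ 0 := norm_ne_zero_iff.mp (by simp [he])
  refine ⟨isIdempotentElem_rankOne_self he, (isStarProjection_rankOne_self he).isSelfAdjoint, ?_⟩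
  exact Module.rank_eq_one_iff_finrank_eq_one.mp (rank_rankOne he0 he0)

theorem IsEffect.ofReal_smul {E : H →L[ℂ] H} (hE : IsEffect E) {c : ℝ} (hc : c ∈ Set.Icc 0 1) :
    IsEffect ((c : ℂ) • E) := by
  have hE0 := (nonneg_iff_isPositive E).mp hE.1
  refine ⟨(nonneg_iff_isPositive _).mpr (hE0.smul_of_nonneg (by exact_mod_cast hc.1)),
    le_trans ?_ hE.2⟩
  rw [le_def, show E - (c : ℂ) • E = ((1 - c : ℝ) : ℂ) • E by simp [sub_smul]]
  exact hE0.smul_of_nonneg (by exact_mod_cast sub_nonneg.mpr hc.2)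

theorem IsWeakAtom.isEffect {W : H →L[ℂ] H} (hW : IsWeakAtom W) : IsEffect W := by
  obtain ⟨lam, hlam, e, he, rfl⟩ := hW
  have hP := isStarProjection_rankOne_self (𝕜 := ℂ) he
  exact IsEffect.ofReal_smul ⟨hP.nonneg, hP.le_one⟩ hlam

theorem ofReal_inv_norm_sq_smul_rankOne_self_le_one (u : H) :
    (((‖u‖ ^ 2)⁻¹ : ℝ) : ℂ) • rankOne ℂ u u ≤ 1 := by
  rcases eq_or_ne u 0 with rfl | hu
  · simp
  obtain ⟨e, he, hue⟩ := exists_norm_eq_one_rankOne_self_eq hu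
  rw [hue, smul_smul, ← Complex.ofReal_mul, inv_mul_cancel₀ (by positivity), Complex.ofReal_one,
    one_smul]
  exact (isStarProjection_rankOne_self he).le_one

theorem ofReal_inv_norm_sq_smul_rankOne_adjoint_le (T : H →L[ℂ] H) (u : H) :
    (((‖u‖ ^ 2)⁻¹ : ℝ) : ℂ) • rankOne ℂ (adjoint T u) (adjoint T u) ≤ star T * T := by
  have h := star_left_conjugate_le_conjugate (ofReal_inv_norm_sq_smul_rankOne_self_le_one u) T
  rwa [mul_one, mul_smul_comm, smul_mul_assoc, star_eq_adjoint, mul_def, mul_def, comp_rankOne,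
    rankOne_comp] at h

theorem IsEffect.le_of_forall_isWeakAtom_le {A B : H →L[ℂ] H} (hA : IsEffect A) (hB : 0 ≤ B)
    (h : ∀ W, IsWeakAtom W → W ≤ A → W ≤ B) : A ≤ B := by
  obtain ⟨T, rfl⟩ := CStarAlgebra.nonneg_iff_eq_star_mul_self.mp hA.1
  rw [le_iff_forall_inner_le]
  intro y
  have hTy : ⟪(star T * T) y, y⟫_ℂ = ((‖T y‖ ^ 2 : ℝ) : ℂ) := by
    rw [star_eq_adjoint, mul_def, comp_apply, adjoint_inner_left, inner_self_eq_ofReal_norm_sq]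
  rcases eq_or_ne (T y) 0 with hy | hy
  · rw [hTy, hy, norm_zero]
    simpa using ((nonneg_iff_isPositive B).mp hB).inner_nonneg_left y
  have hTy0 : ((‖T y‖ ^ 2 : ℝ) : ℂ) ≠ 0 := by exact_mod_cast pow_ne_zero 2 (norm_ne_zero_iff.mpr hy)
  set W := (((‖T y‖ ^ 2)⁻¹ : ℝ) : ℂ) • rankOne ℂ ((star T * T) y) ((star T * T) y)
  have hWA : W ≤ star T * T := ofReal_inv_norm_sq_smul_rankOne_adjoint_le T (T y)
  have hWy : W y = (star T * T) y := by
    simp only [W, smul_apply, rankOne_apply, hTy, smul_smul]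
    rw [Complex.ofReal_inv, inv_mul_cancel₀ hTy0, one_smul]
  have hAy : (star T * T) y ≠ 0 := fun h0 => hTy0 (by rw [← hTy, h0, inner_zero_left])
  have hW : IsWeakAtom W :=
    isWeakAtom_ofReal_smul_rankOne_self_of_le_one (by positivity) hAy (hWA.trans hA.2)
  rw [← hWy]
  exact (le_iff_forall_inner_le _ _).mp (h W hW hWA) y

theorem IsEffect.eq_of_forall_isWeakAtom_le_iff {A B : H →L[ℂ] H} (hA : IsEffect A)
    (hB : IsEffect B) (h : ∀ W, IsWeakAtom W → (W ≤ A ↔ W ≤ B)) : A = B :=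
  le_antisymm (hA.le_of_forall_isWeakAtom_le hB.1 fun W hW => (h W hW).mp)
    (hB.le_of_forall_isWeakAtom_le hA.1 fun W hW => (h W hW).mpr)

namespace IsSemilinearConjugation

variable {σ : ℂ →+* ℂ} [RingHomInvPair σ σ] {e : H ≃ₛₗ[σ] H} {ψ : (H →L[ℂ] H) → (H →L[ℂ] H)}

theorem isEffect (hψ : IsSemilinearConjugation σ e ψ) {X : H →L[ℂ] H} (hX : IsEffect X) :
    IsEffect (ψ X) := by
  have h0 : ψ 0 = 0 := ext fun x => by rw [hψ.apply_apply, zero_apply, map_zero, zero_apply]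
  have h1 : ψ 1 = 1 := ext fun x => by simp [hψ.apply_apply]
  rw [IsEffect, ← h0, ← h1, hψ.le_iff, hψ.le_iff]
  exact hX

end IsSemilinearConjugation

theorem IsUnitaryOrAntiunitaryConjugation.exists_isSemilinearConjugation
    {ψ : (H →L[ℂ] H) → (H →L[ℂ] H)} (hψ : IsUnitaryOrAntiunitaryConjugation ψ) :
    ∃ (σ : ℂ →+* ℂ) (_ : RingHomInvPair σ σ) (e : H ≃ₛₗ[σ] H), IsSemilinearConjugation σ e ψ := by
  rcases hψ with ⟨U, hU, hU', hψU⟩ | ⟨f, g, ⟨-, hf_add, hf_smul, hf_inner⟩, hgf, hfg, hψf⟩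
  · let u : unitary (H →L[ℂ] H) := ⟨U, Unitary.mem_iff.mpr ⟨hU', hU⟩⟩
    exact ⟨RingHom.id ℂ, inferInstance, (Unitary.linearIsometryEquiv u).toLinearEquiv,
      ⟨fun _ => rfl, Unitary.inner_map_map u, fun X x => by rw [hψU]; rfl⟩⟩
  · exact ⟨starRingEnd ℂ, inferInstance,
      { toFun := f, invFun := g, map_add' := hf_add, map_smul' := hf_smul,
        left_inv := hgf, right_inv := hfg },
      ⟨Complex.conj_ofReal, fun x y => (hf_inner x y).trans (inner_conj_symm y x).symm, hψf⟩⟩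

end HilbertSpace

theorem orderAuto_eq_conjugation_of_eq_on_weak_atoms_general
    {H : Type} [NormedAddCommGroup H] [InnerProductSpace ℂ H] [CompleteSpace H]
    (φ ψ : (H →L[ℂ] H) → (H →L[ℂ] H))
    (hbij : Set.BijOn φ {E | IsEffect E} {E | IsEffect E})
    (horder : ∀ E F : H →L[ℂ] H, IsEffect E → IsEffect F → (E ≤ F ↔ φ E ≤ φ F))
    (hψ : IsUnitaryOrAntiunitaryConjugation ψ)
    (hatoms : ∀ P : H →L[ℂ] H, IsRankOneProjection P →
      ∀ lam : ℝ, lam ∈ Set.Icc (0:ℝ) 1 → φ ((lam : ℂ) • P) = ψ ((lam : ℂ) • P)) :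
    ∀ E : H →L[ℂ] H, IsEffect E → φ E = ψ E := by
  obtain ⟨σ, _, e, hψe⟩ := hψ.exists_isSemilinearConjugation
  have hφψ : ∀ W, IsWeakAtom W → φ W = ψ W := by
    rintro W ⟨lam, hlam, v, hv, rfl⟩
    exact hatoms _ (isRankOneProjection_rankOne_self hv) lam hlam
  intro E hE
  refine (hbij.mapsTo hE).eq_of_forall_isWeakAtom_le_iff (hψe.isEffect hE) fun W hW => ?_
  obtain ⟨W', hW', rfl⟩ := hψe.exists_isWeakAtom_apply_eq hW
  rw [← hφψ W' hW', ← horder W' E hW'.isEffect hE, hφψ W' hW', hψe.le_iff]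

/-- if `dim H ≥ 3` and an order automorphism `φ` of `E(H)` agrees with
conjugation by a fixed unitary or antiunitary operator on all weak atoms `λP`, then it
agrees with that conjugation on all effects. -/
theorem orderAuto_eq_conjugation_of_eq_on_weak_atoms
    {H : Type} [NormedAddCommGroup H] [InnerProductSpace ℂ H] [CompleteSpace H]
    (hdim : 3 ≤ Module.rank ℂ H)
    (φ ψ : (H →L[ℂ] H) → (H →L[ℂ] H))
    (hbij : Set.BijOn φ {E | IsEffect E} {E | IsEffect E})
    (horder : ∀ E F : H →L[ℂ] H, IsEffect E → IsEffect F → (E ≤ F ↔ φ E ≤ φ F))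
    (hψ : IsUnitaryOrAntiunitaryConjugation ψ)
    (hatoms : ∀ P : H →L[ℂ] H, IsRankOneProjection P →
      ∀ lam : ℝ, lam ∈ Set.Icc (0:ℝ) 1 → φ ((lam : ℂ) • P) = ψ ((lam : ℂ) • P)) :
    ∀ E : H →L[ℂ] H, IsEffect E → φ E = ψ E :=
  orderAuto_eq_conjugation_of_eq_on_weak_atoms_general φ ψ hbij horder hψ hatoms
end

section
/- Every effect E on a complex Hilbert space H is the supremum, in the partially ordered set E(H), of the set of weak atoms it majorizes: E = sup { tP : P a rank-one projection, t ∈ [0,1], tP ≤ E }. -/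
/-! With `S = √E`, every vector `x` of norm at most one yields a weak atom `|Sx⟩⟨Sx| ≤ E`, since
`|⟪Sx, u⟫|² = |⟪x, Su⟫|² ≤ ‖Su‖² = ⟪Eu, u⟫`; its weight `‖Sx‖²` is at most one because `E ≤ 1`.
For `x = Sz / ‖Sz‖` the atom has the same quadratic form as `E` at `z`, as
`|⟪x, Sz⟫|² = ‖Sz‖² = ⟪Ez, z⟫`. Hence an upper bound `B` of these atoms satisfies
`⟪Ez, z⟫ ≤ ⟪Bz, z⟫` for every `z`, i.e. `E ≤ B`. -/

open scoped InnerProductSpace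

open InnerProductSpace RCLike

theorem norm_inv_norm_smul_le_one {𝕜 E : Type*} [RCLike 𝕜] [NormedAddCommGroup E]
    [NormedSpace 𝕜 E] (y : E) : ‖(‖y‖⁻¹ : 𝕜) • y‖ ≤ 1 := by
  simpa [norm_smul] using inv_mul_le_one

section RCLike

variable {𝕜 E : Type*} [RCLike 𝕜] [NormedAddCommGroup E] [InnerProductSpace 𝕜 E]

theorem norm_inner_inv_norm_smul_self (y : E) : ‖⟪(‖y‖⁻¹ : 𝕜) • y, y⟫_𝕜‖ = ‖y‖ := by
  rw [inner_smul_left, norm_mul, norm_conj, ← inner_self_re_eq_norm, inner_self_eq_norm_sq]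
  simp [sq, ← mul_assoc, inv_mul_mul_self]

theorem ContinuousLinearMap.re_inner_le_re_inner_of_le {A B : E →L[𝕜] E} (h : A ≤ B) (u : E) :
    re ⟪A u, u⟫_𝕜 ≤ re ⟪B u, u⟫_𝕜 := by
  simpa [inner_sub_left] using h.re_inner_nonneg_left u

theorem InnerProductSpace.re_inner_rankOne_self_apply (v u : E) :
    re ⟪rankOne 𝕜 v v u, u⟫_𝕜 = ‖⟪v, u⟫_𝕜‖ ^ 2 := by
  rw [rankOne_apply, inner_smul_left, RCLike.conj_mul, ← ofReal_pow, ofReal_re]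

theorem InnerProductSpace.norm_le_one_of_rankOne_self_le_one {v : E} (h : rankOne 𝕜 v v ≤ 1) :
    ‖v‖ ≤ 1 := by
  have hv := ContinuousLinearMap.re_inner_le_re_inner_of_le h v
  rw [re_inner_rankOne_self_apply, one_apply_eq_self, ← inner_self_re_eq_norm,
    inner_self_eq_norm_sq] at hv
  nlinarith [norm_nonneg v, mul_self_nonneg (‖v‖ - 1)]

variable [CompleteSpace E]

theorem ContinuousLinearMap.le_of_re_inner_le_re_inner {A B : E →L[𝕜] E} (hA : IsSelfAdjoint A)
    (hB : IsSelfAdjoint B) (h : ∀ u, re ⟪A u, u⟫_𝕜 ≤ re ⟪B u, u⟫_𝕜) : A ≤ B :=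
  ⟨isSelfAdjoint_iff_isSymmetric.mp (hB.sub hA), fun u => by
    simpa [reApplyInnerSelf, inner_sub_left] using h u⟩

theorem ContinuousLinearMap.re_inner_star_mul_self_apply (A : E →L[𝕜] E) (u : E) :
    re ⟪(star A * A) u, u⟫_𝕜 = ‖A u‖ ^ 2 := by
  rw [mul_apply_eq_comp, star_eq_adjoint, adjoint_inner_left, inner_self_eq_norm_sq]

theorem InnerProductSpace.rankOne_star_apply_self_le_star_mul_self (A : E →L[𝕜] E) {x : E}
    (hx : ‖x‖ ≤ 1) : rankOne 𝕜 (star A x) (star A x) ≤ star A * A := by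
  refine ContinuousLinearMap.le_of_re_inner_le_re_inner (isPositive_rankOne_self _).isSelfAdjoint
    (.star_mul_self A) fun u => ?_
  rw [re_inner_rankOne_self_apply, ContinuousLinearMap.re_inner_star_mul_self_apply,
    ContinuousLinearMap.star_eq_adjoint, ContinuousLinearMap.adjoint_inner_left]
  calc ‖⟪x, A u⟫_𝕜‖ ^ 2 ≤ (‖x‖ * ‖A u‖) ^ 2 := by gcongr; exact norm_inner_le_norm x (A u)
    _ ≤ ‖A u‖ ^ 2 := by gcongr; exact mul_le_of_le_one_left (norm_nonneg _) hx

end RCLike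

section Complex

variable {H : Type*} [NormedAddCommGroup H] [InnerProductSpace ℂ H] [CompleteSpace H]

theorem ContinuousLinearMap.le_of_forall_rankOne_self_le {E B : H →L[ℂ] H} (hE : 0 ≤ E)
    (hB : IsSelfAdjoint B) (h : ∀ v, rankOne ℂ v v ≤ E → rankOne ℂ v v ≤ B) : E ≤ B := by
  set S := CFC.sqrt E
  have hS : IsSelfAdjoint S := .of_nonneg (CFC.sqrt_nonneg E)
  have hSS : star S * S = E := by rw [hS.star_eq, CFC.sqrt_mul_sqrt_self E hE]
  refine le_of_re_inner_le_re_inner (.of_nonneg hE) hB fun z => ?_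
  -- If `S z = 0`, then `x = 0` and the computation below still holds.
  set x : H := (‖S z‖⁻¹ : ℂ) • S z
  have hle : rankOne ℂ (star S x) (star S x) ≤ B :=
    h _ (hSS ▸ rankOne_star_apply_self_le_star_mul_self S (norm_inv_norm_smul_le_one (S z)))
  calc re ⟪E z, z⟫_ℂ = re ⟪rankOne ℂ (star S x) (star S x) z, z⟫_ℂ := by
        rw [re_inner_rankOne_self_apply, star_eq_adjoint, adjoint_inner_left, ← hSS,
          re_inner_star_mul_self_apply]
        exact congrArg (· ^ 2) (norm_inner_inv_norm_smul_self (S z)).symm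
    _ ≤ re ⟪B z, z⟫_ℂ := re_inner_le_re_inner_of_le hle z

end Complex

theorem exists_isRankOneProjection_smul_eq_rankOne_self {H : Type} [NormedAddCommGroup H]
    [InnerProductSpace ℂ H] [CompleteSpace H] {v : H} (hv : v ≠ 0) :
    ∃ P, IsRankOneProjection P ∧ ((‖v‖ ^ 2 : ℝ) : ℂ) • P = rankOne ℂ v v := by
  set y : H := (‖v‖⁻¹ : ℂ) • v
  have hy : ‖y‖ = 1 := norm_smul_inv_norm hv
  have hy0 : y ≠ 0 := norm_ne_zero_iff.mp (hy ▸ one_ne_zero)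
  refine ⟨rankOne ℂ y y, ⟨isIdempotentElem_rankOne_self hy,
    (isStarProjection_rankOne_self hy).isSelfAdjoint,
    Module.finrank_eq_of_rank_eq (rank_rankOne hy0 hy0)⟩, ?_⟩
  have hv' : (‖v‖ : ℂ) ≠ 0 := by exact_mod_cast norm_ne_zero_iff.mpr hv
  ext z
  simp only [Complex.ofReal_pow, map_smul, smul_apply, map_smulₛₗ, map_inv₀,
    Complex.conj_ofReal, smul_smul, rankOne_apply, y]
  field_simp

/-- Busch–Gudder: every effect `E` is the supremum, in the partially
ordered set `E(H)`, of the set of weak atoms `tP` it majorizes. -/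
theorem effect_eq_sup_of_weak_atoms
    {H : Type} [NormedAddCommGroup H] [InnerProductSpace ℂ H] [CompleteSpace H]
    (E : H →L[ℂ] H) (hE : IsEffect E) :
    (∀ F ∈ {F : H →L[ℂ] H | ∃ (P : H →L[ℂ] H) (t : ℝ), IsRankOneProjection P ∧
        t ∈ Set.Icc (0:ℝ) 1 ∧ F = (t : ℂ) • P ∧ (t : ℂ) • P ≤ E}, F ≤ E) ∧
      ∀ B : H →L[ℂ] H, IsEffect B →
        (∀ F ∈ {F : H →L[ℂ] H | ∃ (P : H →L[ℂ] H) (t : ℝ), IsRankOneProjection P ∧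
          t ∈ Set.Icc (0:ℝ) 1 ∧ F = (t : ℂ) • P ∧ (t : ℂ) • P ≤ E}, F ≤ B) → E ≤ B := by
  refine ⟨fun F ⟨P, t, _, _, hF, hPE⟩ => hF ▸ hPE, fun B hB hub => ?_⟩
  refine ContinuousLinearMap.le_of_forall_rankOne_self_le hE.1 (.of_nonneg hB.1) fun v hvE => ?_
  rcases eq_or_ne v 0 with rfl | hv
  · simpa using hB.1
  obtain ⟨P, hP, hPv⟩ := exists_isRankOneProjection_smul_eq_rankOne_self hv
  have hv1 : ‖v‖ ≤ 1 := norm_le_one_of_rankOne_self_le_one (hvE.trans hE.2)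
  rw [← hPv] at hvE ⊢
  exact hub _ ⟨P, _, hP, ⟨by positivity, pow_le_one₀ (norm_nonneg v) hv1⟩, rfl, hvE⟩
end

section
/- Let A, B be linear operators on a complex vector space V such that for every x ∈ V the vectors Ax and Bx are linearly dependent. If the rank of B is at least 2, then A = λB for some scalar λ ∈ ℂ. -/
/-!
Wherever `B x ≠ 0`, local dependence gives a scalar `c x` with `A x = c x • B x`. If `B x` and
`B y` are independent, comparing `A (x + y) = c (x + y) • (B x + B y)` with `c x • B x + c y • B y`
forces `c x = c (x + y) = c y`. If they are dependent, rank at least two provides `z` with `B z`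
independent of both, so `c x = c z = c y`. Finally `A` and `c • B` agree on the complement of
`ker B`, which spans the whole space as `B ≠ 0`.
-/

open Submodule

section LocallyLinearlyDependent

variable {K V W : Type*} [Field K] [AddCommGroup V] [Module K V] [AddCommGroup W] [Module K W]

theorem exists_eq_smul_of_not_linearIndependent_pair {u v : W}
    (h : ¬ LinearIndependent K ![u, v]) (hv : v ≠ 0) : ∃ c : K, u = c • v := by
  simpa [linearIndependent_fin2, hv, eq_comm] using h

theorem linearIndependent_pair_of_notMem_span_singleton {u v : W} (hu : u ≠ 0)
    (hv : v ∉ K ∙ u) : LinearIndependent K ![u, v] :=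
  (LinearIndependent.pair_iff' hu).mpr fun a ha ↦ hv (ha ▸ smul_mem _ a (mem_span_singleton_self u))

theorem exists_mem_notMem_span_singleton_of_two_le_rank {p : Submodule K W}
    (hp : 2 ≤ Module.rank K p) (w : W) : ∃ v ∈ p, v ∉ K ∙ w := by
  by_contra! h
  have hle : Module.rank K p ≤ 1 :=
    (rank_mono (show p ≤ K ∙ w from h)).trans (by simpa using rank_span_le (R := K) {w})
  exact absurd (hp.trans hle) (by norm_num)

variable {A B : V →ₗ[K] W}

theorem eq_of_linearIndependent_pair_apply (hdep : ∀ x, ¬ LinearIndependent K ![A x, B x])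
    {x y : V} {a b : K} (hxy : LinearIndependent K ![B x, B y])
    (hx : A x = a • B x) (hy : A y = b • B y) : a = b := by
  have hsum : B (x + y) ≠ 0 := by
    intro h0
    rw [map_add] at h0
    exact one_ne_zero (LinearIndependent.pair_iff.mp hxy 1 1 (by simpa using h0)).1
  obtain ⟨c, hc⟩ := exists_eq_smul_of_not_linearIndependent_pair (hdep (x + y)) hsum
  have hcomb : (a - c) • B x + (b - c) • B y = 0 := by
    rw [sub_smul, sub_smul, ← hx, ← hy]
    simp only [map_add, smul_add] at hc
    rw [sub_add_sub_comm, hc, sub_self]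
  obtain ⟨hac, hbc⟩ := LinearIndependent.pair_iff.mp hxy _ _ hcomb
  rw [sub_eq_zero.mp hac, sub_eq_zero.mp hbc]

theorem eq_of_apply_ne_zero_of_two_le_rank (hdep : ∀ x, ¬ LinearIndependent K ![A x, B x])
    (hrank : 2 ≤ Module.rank K (LinearMap.range B)) {x y : V} {a b : K}
    (hBx : B x ≠ 0) (hBy : B y ≠ 0) (hx : A x = a • B x) (hy : A y = b • B y) : a = b := by
  by_cases hxy : LinearIndependent K ![B x, B y]
  · exact eq_of_linearIndependent_pair_apply hdep hxy hx hy
  obtain ⟨_, ⟨z, rfl⟩, hz⟩ := exists_mem_notMem_span_singleton_of_two_le_rank hrank (B x)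
  obtain ⟨d, hd⟩ := exists_eq_smul_of_not_linearIndependent_pair hxy hBy
  have hd0 : d ≠ 0 := by rintro rfl; exact hBx (by simpa using hd)
  have hspan : K ∙ B x = K ∙ B y := by rw [hd, span_singleton_smul_eq hd0.isUnit]
  obtain ⟨e, he⟩ := exists_eq_smul_of_not_linearIndependent_pair (hdep z)
    fun h0 ↦ hz (h0 ▸ zero_mem _)
  have hxz := linearIndependent_pair_of_notMem_span_singleton hBx hz
  have hyz := linearIndependent_pair_of_notMem_span_singleton hBy (hspan ▸ hz)
  rw [eq_of_linearIndependent_pair_apply hdep hxz hx he,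
    eq_of_linearIndependent_pair_apply hdep hyz hy he]

theorem eq_smul_of_forall_apply_ne_zero {c : K} {x₀ : V} (hx₀ : B x₀ ≠ 0)
    (h : ∀ x, B x ≠ 0 → A x = c • B x) : A = c • B := by
  ext x
  by_cases hx : B x = 0
  · have hshift : B (x + x₀) ≠ 0 := by rwa [map_add, hx, zero_add]
    have hAx : A x = A (x + x₀) - A x₀ := by rw [map_add, add_sub_cancel_right]
    rw [LinearMap.smul_apply, hAx, h _ hshift, h _ hx₀, map_add, hx, zero_add, sub_self,
      smul_zero]
  · exact h x hx

end LocallyLinearlyDependent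

/-- if `A`, `B` are linear operators on a complex vector space such that
`Ax` and `Bx` are linearly dependent for every `x` (local linear dependence), and the
rank of `B` is at least `2`, then `A` is a scalar multiple of `B`. -/
theorem locally_linearly_dependent_of_rank_ge_two
    {V : Type} [AddCommGroup V] [Module ℂ V]
    (A B : V →ₗ[ℂ] V)
    (hdep : ∀ x : V, ¬ LinearIndependent ℂ ![A x, B x])
    (hrank : 2 ≤ Module.rank ℂ (LinearMap.range B)) :
    ∃ lam : ℂ, A = lam • B := by
  obtain ⟨_, ⟨x₀, rfl⟩, hx₀⟩ := exists_mem_notMem_span_singleton_of_two_le_rank hrank 0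
  rw [span_singleton_eq_bot.mpr rfl, mem_bot] at hx₀
  obtain ⟨c, hc⟩ := exists_eq_smul_of_not_linearIndependent_pair (hdep x₀) hx₀
  refine ⟨c, eq_smul_of_forall_apply_ne_zero hx₀ fun x hx ↦ ?_⟩
  obtain ⟨a, ha⟩ := exists_eq_smul_of_not_linearIndependent_pair (hdep x) hx
  rwa [eq_of_apply_ne_zero_of_two_le_rank hdep hrank hx hx₀ ha hc] at ha
end

section
/- Let A be a bounded linear (or conjugate-linear) bijective operator on H and D, D' positive trace-class operators such that ⟨D'Ax, Ax⟩⟨x,x⟩ = ⟨Dx,x⟩⟨Ax,Ax⟩ for all x ∈ H. Then for all x, y ∈ H with ⟨x,y⟩ = 0 one has ⟨Dx,y⟩·⟨A*Ax,y⟩ = 0. -/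
open scoped InnerProductSpace

open Complex in
/-- let `A` be a bounded bijective linear or conjugate-linear operator on
`H` (the operator `B` below plays the role of `A*A` in either case) and `D`, `D'`
positive trace-class operators with `⟨D'Ax, Ax⟩⟨x,x⟩ = ⟨Dx,x⟩⟨Ax,Ax⟩` for all `x`.
Then `⟨x,y⟩ = 0` implies `⟨Dx,y⟩ · ⟨A*Ax,y⟩ = 0`. -/
theorem orthogonality_implication_from_probability_identity
    {H : Type} [NormedAddCommGroup H] [InnerProductSpace ℂ H] [CompleteSpace H]
    {ι : Type} (b : HilbertBasis ι ℂ H)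
    (D D' : H →L[ℂ] H)
    (hD : 0 ≤ D) (hDtc : Summable fun i => ⟪D (b i), b i⟫_ℂ)
    (hD' : 0 ≤ D') (hD'tc : Summable fun i => ⟪D' (b i), b i⟫_ℂ)
    (A : H → H) (hbij : Function.Bijective A)
    (hadd : ∀ x y : H, A (x + y) = A x + A y)
    (hbdd : ∃ C : ℝ, ∀ x : H, ‖A x‖ ≤ C * ‖x‖)
    (B : H →L[ℂ] H)
    (hcase :
      ((∀ (c : ℂ) (x : H), A (c • x) = c • A x) ∧
        ∀ x y : H, ⟪B x, y⟫_ℂ = ⟪A x, A y⟫_ℂ) ∨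
      ((∀ (c : ℂ) (x : H), A (c • x) = (starRingEnd ℂ c) • A x) ∧
        ∀ x y : H, ⟪B x, y⟫_ℂ = ⟪A y, A x⟫_ℂ))
    (hmain : ∀ x : H, ⟪D' (A x), A x⟫_ℂ * ⟪x, x⟫_ℂ = ⟪D x, x⟫_ℂ * ⟪A x, A x⟫_ℂ) :
    ∀ x y : H, ⟪x, y⟫_ℂ = 0 → ⟪D x, y⟫_ℂ * ⟪B x, y⟫_ℂ = 0 := by
  intro x y hxy
  have hxy' : ⟪y, x⟫_ℂ = 0 := by rw [← inner_conj_symm, hxy, map_zero]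
  rcases hcase with ⟨hsmul, hB⟩ | ⟨hsmul, hB⟩
  · have hA : ∀ c : ℂ, A (c • x + y) = c • A x + A y := fun c => by
      rw [hadd, hsmul]
    have key : ∀ c : ℂ, ⟪D' (A (c • x + y)), A (c • x + y)⟫_ℂ * ⟪c • x + y, c • x + y⟫_ℂ
        = ⟪D (c • x + y), c • x + y⟫_ℂ * ⟪A (c • x + y), A (c • x + y)⟫_ℂ := fun c =>
      hmain (c • x + y)
    have k := fun c : ℂ => (key c)
    simp only [hA, map_add, map_smul, inner_add_left, inner_add_right, inner_smul_left,
      inner_smul_right, smul_eq_mul, hxy, hxy', mul_zero, add_zero, zero_add] at k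
    have k1 := k 1
    have k2 := k (-1)
    have k3 := k I
    have k4 := k (-I)
    have k5 := k (1 + I)
    have k6 := k (1 - I)
    have k7 := k (-1 + I)
    have k8 := k (-1 - I)
    simp only [map_one, map_neg, Complex.conj_I, map_add, map_sub, neg_neg] at k1 k2 k3 k4 k5 k6 k7 k8
    rw [hB]
    linear_combination (norm := (ring_nf; simp only [Complex.I_sq, Complex.I_pow_four]; ring_nf))
      (-(1:ℂ)/8) * k1 + (-(1:ℂ)/8) * k2 + ((1:ℂ)/8) * k3 + ((1:ℂ)/8) * k4 +
      (-I/16) * k5 + (I/16) * k6 + (I/16) * k7 + (-I/16) * k8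
  · have hA : ∀ c : ℂ, A (c • x + y) = (starRingEnd ℂ c) • A x + A y := fun c => by
      rw [hadd, hsmul]
    have key : ∀ c : ℂ, ⟪D' (A (c • x + y)), A (c • x + y)⟫_ℂ * ⟪c • x + y, c • x + y⟫_ℂ
        = ⟪D (c • x + y), c • x + y⟫_ℂ * ⟪A (c • x + y), A (c • x + y)⟫_ℂ := fun c =>
      hmain (c • x + y)
    have k := fun c : ℂ => (key c)
    simp only [hA, map_add, map_smul, inner_add_left, inner_add_right, inner_smul_left,
      inner_smul_right, smul_eq_mul, hxy, hxy', mul_zero, add_zero, zero_add] at k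
    have k1 := k 1
    have k2 := k (-1)
    have k3 := k I
    have k4 := k (-I)
    have k5 := k (1 + I)
    have k6 := k (1 - I)
    have k7 := k (-1 + I)
    have k8 := k (-1 - I)
    simp only [map_one, map_neg, Complex.conj_I, map_add, map_sub, neg_neg] at k1 k2 k3 k4 k5 k6 k7 k8
    rw [hB]
    linear_combination (norm := (ring_nf; simp only [Complex.I_sq, Complex.I_pow_four]; ring_nf))
      (-(1:ℂ)/8) * k1 + (-(1:ℂ)/8) * k2 + ((1:ℂ)/8) * k3 + ((1:ℂ)/8) * k4 +
      (-I/16) * k5 + (I/16) * k6 + (I/16) * k7 + (-I/16) * k8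
end

section
/- Let A be a bijective linear or conjugate-linear bounded operator on H and let D, D' be positive trace-class operators with ‖√D' Ax‖² / ‖Ax‖² = ‖√D x‖² / ‖x‖² for all nonzero x ∈ H. If D is not a scalar multiple of the identity, then A*A = μI for some μ > 0, i.e., A is a positive scalar multiple of a unitary (resp. antiunitary) operator. -/
/-! Write `q_X x = ‖X x‖²` on the real inner product space underlying `H`. Clearing denominators,
the hypothesis says that the quartic form `q_{√D' A} · ‖·‖²` factors as `q_{√D} · q_A`. On the
plane spanned by a unit vector `u` and a vector `v ⊥ u` the factor `‖u + t v‖² = 1 + ‖v‖² t²` has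
no real root, so it divides `q_{√D}` or `q_A` there: one of the two forms is `‖·‖²` times its
value at `u` on that plane. For each of the two forms the set of such `v` is cut out by polynomial
equations, and a line cannot be covered by two finite sets, so the same form works for every
`v ⊥ u`, hence on all of `H`. As `D` is not scalar, `q_A = μ ‖·‖²`, i.e. `⟪B x, x⟫ = μ ‖x‖²`. -/

open scoped InnerProductSpace

theorem quadratic_factor_dichotomy {n T0 T1 T2 D0 D1 D2 B0 B1 B2 : ℝ} (hn : 0 < n)
    (h : ∀ t : ℝ, (T0 + 2 * T1 * t + T2 * t ^ 2) * (1 + n * t ^ 2)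
        = (D0 + 2 * D1 * t + D2 * t ^ 2) * (B0 + 2 * B1 * t + B2 * t ^ 2)) :
    (D1 = 0 ∧ n * D0 = D2) ∨ (B1 = 0 ∧ n * B0 = B2) := by
  -- real and imaginary parts (the latter up to `2 √n`) of `n² D(ω) B(ω) = 0`, `ω = i / √n`
  have h0 := h 0; have h1 := h 1; have hm1 := h (-1); have h2 := h 2; have hm2 := h (-2)
  have hre : (n * D0 - D2) * (n * B0 - B2) = 4 * n * (D1 * B1) := by
    linear_combination (-n ^ 2 - 5 / 4 * n - 1 / 4) * h0 + (2 / 3 * n + 1 / 6) * (h1 + hm1)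
      - (n / 24 + 1 / 24) * (h2 + hm2)
  have him : (n * D0 - D2) * B1 + D1 * (n * B0 - B2) = 0 := by
    linear_combination (-n / 3 - 1 / 12) * (h1 - hm1) + (n / 24 + 1 / 24) * (h2 - hm2)
  by_cases hB1 : B1 = 0
  · by_cases hB : n * B0 - B2 = 0
    · exact Or.inr ⟨hB1, sub_eq_zero.mp hB⟩
    · refine Or.inl ⟨?_, sub_eq_zero.mp ?_⟩
      · exact (mul_eq_zero.mp (by linear_combination him - (n * D0 - D2) * hB1)).resolve_right hB
      · exact (mul_eq_zero.mp (by linear_combination hre + 4 * n * D1 * hB1)).resolve_right hB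
  · have hsq : B1 * ((n * D0 - D2) ^ 2 + 4 * n * D1 ^ 2) = 0 := by
      linear_combination (n * D0 - D2) * him - D1 * hre
    have hsq' := (mul_eq_zero.mp hsq).resolve_left hB1
    have hnD1 : n * D1 ^ 2 = 0 := by
      nlinarith [sq_nonneg (n * D0 - D2), mul_nonneg hn.le (sq_nonneg D1)]
    have hD1 : D1 = 0 := pow_eq_zero_iff two_ne_zero |>.mp ((mul_eq_zero.mp hnD1).resolve_left hn.ne')
    refine Or.inl ⟨hD1, sub_eq_zero.mp (pow_eq_zero_iff two_ne_zero |>.mp ?_)⟩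
    linear_combination hsq' - 4 * hnD1

theorem finite_setOf_quadratic_eq_zero {a b c t₀ : ℝ} (h : a + b * t₀ + c * t₀ ^ 2 ≠ 0) :
    {t : ℝ | a + b * t + c * t ^ 2 = 0}.Finite := by
  open Polynomial in
  have hp : C a + C b * X + C c * X ^ 2 ≠ 0 := fun hp => h (by simpa using congrArg (eval t₀) hp)
  convert finite_setOfPred_isRoot hp using 2
  simp

section Real

variable {E F : Type*} [NormedAddCommGroup E] [InnerProductSpace ℝ E]
  [NormedAddCommGroup F] [InnerProductSpace ℝ F]

theorem norm_add_smul_sq_real (x y : F) (t : ℝ) :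
    ‖x + t • y‖ ^ 2 = ‖x‖ ^ 2 + 2 * t * ⟪x, y⟫_ℝ + t ^ 2 * ‖y‖ ^ 2 := by
  rw [norm_add_sq_real, norm_smul, real_inner_smul_right, mul_pow, Real.norm_eq_abs, sq_abs]
  ring

def IsConformalPair (L : E →ₗ[ℝ] F) (u v : E) : Prop :=
  ⟪L u, L v⟫_ℝ = 0 ∧ ‖v‖ ^ 2 * ‖L u‖ ^ 2 = ‖L v‖ ^ 2

theorem isConformalPair_add_smul_iff (L : E →ₗ[ℝ] F) (u v w : E) (t : ℝ) :
    IsConformalPair L u (v + t • w) ↔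
      ⟪L u, L v⟫_ℝ + ⟪L u, L w⟫_ℝ * t + 0 * t ^ 2 = 0 ∧
      (‖v‖ ^ 2 * ‖L u‖ ^ 2 - ‖L v‖ ^ 2) + 2 * (⟪v, w⟫_ℝ * ‖L u‖ ^ 2 - ⟪L v, L w⟫_ℝ) * t
        + (‖w‖ ^ 2 * ‖L u‖ ^ 2 - ‖L w‖ ^ 2) * t ^ 2 = 0 := by
  rw [IsConformalPair, map_add, map_smul, inner_add_right, real_inner_smul_right,
    norm_add_smul_sq_real, norm_add_smul_sq_real]
  constructor <;> rintro ⟨h₁, h₂⟩ <;> exact ⟨by linear_combination h₁, by linear_combination h₂⟩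

theorem finite_setOf_isConformalPair_add_smul {L : E →ₗ[ℝ] F} {u v w : E} {t₀ : ℝ}
    (h : ¬IsConformalPair L u (v + t₀ • w)) :
    {t : ℝ | IsConformalPair L u (v + t • w)}.Finite := by
  simp only [isConformalPair_add_smul_iff, not_and_or] at h ⊢
  rcases h with h | h
  · exact (finite_setOf_quadratic_eq_zero h).subset fun t ht => ht.1
  · exact (finite_setOf_quadratic_eq_zero h).subset fun t ht => ht.2

theorem norm_sq_eq_of_forall_isConformalPair {L : E →ₗ[ℝ] F} {u : E} (hu : ‖u‖ = 1)
    (h : ∀ v, ⟪u, v⟫_ℝ = 0 → IsConformalPair L u v) (x : E) :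
    ‖L x‖ ^ 2 = ‖L u‖ ^ 2 * ‖x‖ ^ 2 := by
  set a := ⟪u, x⟫_ℝ
  have hv : ⟪u, x - a • u⟫_ℝ = 0 := by
    rw [inner_sub_right, real_inner_smul_right, real_inner_self_eq_norm_sq, hu]
    ring
  obtain ⟨h₁, h₂⟩ := h _ hv
  have hx : x = (x - a • u) + a • u := by abel
  rw [hx, map_add, map_smul, norm_add_smul_sq_real, norm_add_smul_sq_real, real_inner_comm,
    h₁, real_inner_comm, hv, ← h₂, hu]
  ring

section Factor

variable {F₁ F₂ F₃ : Type*} [NormedAddCommGroup F₁] [InnerProductSpace ℝ F₁]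
  [NormedAddCommGroup F₂] [InnerProductSpace ℝ F₂] [NormedAddCommGroup F₃] [InnerProductSpace ℝ F₃]
  {R : E →ₗ[ℝ] F₁} {S : E →ₗ[ℝ] F₂} {A : E →ₗ[ℝ] F₃}

theorem isConformalPair_or_isConformalPair
    (hR : ∀ x, ‖R x‖ ^ 2 * ‖x‖ ^ 2 = ‖S x‖ ^ 2 * ‖A x‖ ^ 2)
    {u v : E} (hu : ‖u‖ = 1) (huv : ⟪u, v⟫_ℝ = 0) :
    IsConformalPair S u v ∨ IsConformalPair A u v := by
  rcases eq_or_ne v 0 with rfl | hv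
  · left; simp [IsConformalPair]
  refine quadratic_factor_dichotomy (T0 := ‖R u‖ ^ 2) (T1 := ⟪R u, R v⟫_ℝ) (T2 := ‖R v‖ ^ 2)
    (by positivity) fun t => ?_
  have := hR (u + t • v)
  simp only [map_add, map_smul, norm_add_smul_sq_real, hu, huv] at this
  linear_combination this

theorem forall_isConformalPair_or_forall_isConformalPair
    (hR : ∀ x, ‖R x‖ ^ 2 * ‖x‖ ^ 2 = ‖S x‖ ^ 2 * ‖A x‖ ^ 2) {u : E} (hu : ‖u‖ = 1) :
    (∀ v, ⟪u, v⟫_ℝ = 0 → IsConformalPair S u v) ∨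
      (∀ v, ⟪u, v⟫_ℝ = 0 → IsConformalPair A u v) := by
  by_contra! ⟨⟨v₁, hv₁, hS⟩, ⟨v₂, hv₂, hA⟩⟩
  -- along the line through `v₁` and `v₂`, each alternative holds only finitely often
  have hS' : ¬IsConformalPair S u (v₁ + (0 : ℝ) • (v₂ - v₁)) := by simpa using hS
  have hA' : ¬IsConformalPair A u (v₁ + (1 : ℝ) • (v₂ - v₁)) := by simpa using hA
  refine Set.infinite_univ (α := ℝ) <| ((finite_setOf_isConformalPair_add_smul hS').union
    (finite_setOf_isConformalPair_add_smul hA')).subset fun t _ => ?_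
  refine isConformalPair_or_isConformalPair hR hu ?_
  rw [inner_add_right, real_inner_smul_right, inner_sub_right, hv₁, hv₂]
  ring

theorem exists_norm_sq_eq_mul_or_exists_norm_sq_eq_mul
    (hR : ∀ x, ‖R x‖ ^ 2 * ‖x‖ ^ 2 = ‖S x‖ ^ 2 * ‖A x‖ ^ 2) :
    (∃ c : ℝ, ∀ x, ‖S x‖ ^ 2 = c * ‖x‖ ^ 2) ∨ (∃ c : ℝ, ∀ x, ‖A x‖ ^ 2 = c * ‖x‖ ^ 2) := by
  rcases subsingleton_or_nontrivial E with hE | hE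
  · exact Or.inl ⟨0, fun x => by simp [Subsingleton.elim x 0]⟩
  obtain ⟨u, hu⟩ := exists_norm_eq E zero_le_one
  exact (forall_isConformalPair_or_forall_isConformalPair hR hu).imp
    (fun h => ⟨_, norm_sq_eq_of_forall_isConformalPair hu h⟩)
    (fun h => ⟨_, norm_sq_eq_of_forall_isConformalPair hu h⟩)

end Factor

end Real

section Complex

variable {H : Type*} [NormedAddCommGroup H] [InnerProductSpace ℂ H]

theorem ContinuousLinearMap.eq_smul_one_of_inner_apply_self {T : H →L[ℂ] H} {c : ℝ}
    (h : ∀ x, ⟪T x, x⟫_ℂ = c * ‖x‖ ^ 2) : T = (c : ℂ) • 1 := by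
  rw [← sub_eq_zero]
  refine ContinuousLinearMap.coe_injective ((inner_map_self_eq_zero _).mp fun x => ?_)
  simp [inner_sub_left, inner_smul_left, h, inner_self_eq_norm_sq_to_K, -Complex.coe_smul]

theorem inner_apply_self_eq_norm_cfcSqrt_apply_sq [CompleteSpace H] {T : H →L[ℂ] H}
    (hT : 0 ≤ T) (x : H) : ⟪T x, x⟫_ℂ = (‖CFC.sqrt T x‖ : ℂ) ^ 2 := by
  have hsq : CFC.sqrt T (CFC.sqrt T x) = T x := congr($(CFC.sqrt_mul_sqrt_self T hT) x)
  rw [← hsq, ← ContinuousLinearMap.adjoint_inner_right,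
    (IsSelfAdjoint.of_nonneg (CFC.sqrt_nonneg T)).adjoint_eq, inner_self_eq_norm_sq_to_K]
  rfl

end Complex

theorem adjoint_comp_self_eq_scalar_of_probability_identity_general
    {H : Type} [NormedAddCommGroup H] [InnerProductSpace ℂ H] [CompleteSpace H]
    (D D' : H →L[ℂ] H)
    (hD : 0 ≤ D)
    (hnonscalar : ∀ c : ℂ, D ≠ c • (1 : H →L[ℂ] H))
    (A : H → H) (hbij : Function.Bijective A)
    (hadd : ∀ x y : H, A (x + y) = A x + A y)
    (B : H →L[ℂ] H)
    (hcase :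
      ((∀ (c : ℂ) (x : H), A (c • x) = c • A x) ∧
        ∀ x y : H, ⟪B x, y⟫_ℂ = ⟪A x, A y⟫_ℂ) ∨
      ((∀ (c : ℂ) (x : H), A (c • x) = (starRingEnd ℂ c) • A x) ∧
        ∀ x y : H, ⟪B x, y⟫_ℂ = ⟪A y, A x⟫_ℂ))
    (hmain : ∀ x : H, x ≠ 0 →
      ‖CFC.sqrt D' (A x)‖ ^ 2 / ‖A x‖ ^ 2 = ‖CFC.sqrt D x‖ ^ 2 / ‖x‖ ^ 2) :
    ∃ mu : ℝ, 0 < mu ∧ B = ((mu : ℝ) : ℂ) • (1 : H →L[ℂ] H) := by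
  let : InnerProductSpace ℝ H := InnerProductSpace.complexToReal
  let Aℝ : H →ₗ[ℝ] H :=
    { toFun := A
      map_add' := hadd
      map_smul' := fun r x => by
        rcases hcase with ⟨h, -⟩ | ⟨h, -⟩ <;> simp [← Complex.coe_smul, h] }
  let S : H →ₗ[ℝ] H := (CFC.sqrt D).toLinearMap.restrictScalars ℝ
  let R : H →ₗ[ℝ] H := (CFC.sqrt D').toLinearMap.restrictScalars ℝ ∘ₗ Aℝ
  have hAne : ∀ x, x ≠ 0 → A x ≠ 0 := fun x hx h => hx (hbij.1 (h.trans (map_zero Aℝ).symm))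
  have hR : ∀ x, ‖R x‖ ^ 2 * ‖x‖ ^ 2 = ‖S x‖ ^ 2 * ‖Aℝ x‖ ^ 2 := fun x => by
    rcases eq_or_ne x 0 with rfl | hx
    · simp
    have hAx := hAne x hx
    exact (div_eq_div_iff (by positivity) (by positivity)).mp (hmain x hx)
  have hB : ∀ x, ⟪B x, x⟫_ℂ = (‖A x‖ : ℂ) ^ 2 := by
    rcases hcase with ⟨-, h⟩ | ⟨-, h⟩ <;> simp [h, inner_self_eq_norm_sq_to_K]
  rcases exists_norm_sq_eq_mul_or_exists_norm_sq_eq_mul hR with ⟨c, hc⟩ | ⟨c, hc⟩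
  · refine absurd (ContinuousLinearMap.eq_smul_one_of_inner_apply_self fun x => ?_) (hnonscalar c)
    rw [inner_apply_self_eq_norm_cfcSqrt_apply_sq hD]
    exact_mod_cast hc x
  · obtain ⟨x, hx⟩ : ∃ x, D x ≠ 0 := DFunLike.ne_iff.mp (by simpa using hnonscalar 0)
    have hAx := hAne x fun h => hx (h ▸ map_zero D)
    have hcx : 0 < c * ‖x‖ ^ 2 := hc x ▸ by positivity
    refine ⟨c, pos_of_mul_pos_left hcx (sq_nonneg _), ?_⟩
    exact ContinuousLinearMap.eq_smul_one_of_inner_apply_self fun x => by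
      rw [hB]; exact_mod_cast hc x

/-- let `A` be a bounded bijective linear or conjugate-linear operator on
`H` (the operator `B` below plays the role of `A*A` in either case) and `D`, `D'`
positive trace-class operators with `‖√D' Ax‖²/‖Ax‖² = ‖√D x‖²/‖x‖²` for all nonzero
`x`. If `D` is not a scalar multiple of the identity, then `A*A = μI` for some `μ > 0`,
i.e. `A` is a positive scalar multiple of a unitary (resp. antiunitary) operator. -/
theorem adjoint_comp_self_eq_scalar_of_probability_identity
    {H : Type} [NormedAddCommGroup H] [InnerProductSpace ℂ H] [CompleteSpace H]
    (hdim : 2 ≤ Module.rank ℂ H)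
    {ι : Type} (b : HilbertBasis ι ℂ H)
    (D D' : H →L[ℂ] H)
    (hD : 0 ≤ D) (hDtc : Summable fun i => ⟪D (b i), b i⟫_ℂ)
    (hD' : 0 ≤ D') (hD'tc : Summable fun i => ⟪D' (b i), b i⟫_ℂ)
    (hnonscalar : ∀ c : ℂ, D ≠ c • (1 : H →L[ℂ] H))
    (A : H → H) (hbij : Function.Bijective A)
    (hadd : ∀ x y : H, A (x + y) = A x + A y)
    (hbdd : ∃ C : ℝ, ∀ x : H, ‖A x‖ ≤ C * ‖x‖)
    (B : H →L[ℂ] H)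
    (hcase :
      ((∀ (c : ℂ) (x : H), A (c • x) = c • A x) ∧
        ∀ x y : H, ⟪B x, y⟫_ℂ = ⟪A x, A y⟫_ℂ) ∨
      ((∀ (c : ℂ) (x : H), A (c • x) = (starRingEnd ℂ c) • A x) ∧
        ∀ x y : H, ⟪B x, y⟫_ℂ = ⟪A y, A x⟫_ℂ))
    (hmain : ∀ x : H, x ≠ 0 →
      ‖CFC.sqrt D' (A x)‖ ^ 2 / ‖A x‖ ^ 2 = ‖CFC.sqrt D x‖ ^ 2 / ‖x‖ ^ 2) :
    ∃ mu : ℝ, 0 < mu ∧ B = ((mu : ℝ) : ℂ) • (1 : H →L[ℂ] H) :=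
  adjoint_comp_self_eq_scalar_of_probability_identity_general D D' hD hnonscalar A hbij hadd B hcase
    hmain
end
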